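/- arXiv:2408.09473 — 8 statements merged into one kernel-verified Lean document; each statement's English description precedes it below -/
import Mathlib

section
/- Let P be continuous and strictly differentiable-decreasing on (0, q̄) (i.e., for 0 < q' < q ≤ q̄, P(q') > P(q)), V(q) = ∫₀^q P(z) dz, and let q̂ ∈ (0, q̄) satisfy V(q̂) - q̂·P(q̂) = c where c > 0. Define Ṽ(q) = (V(q) - c)·1_{q>0}. Then the function co(Ṽ) defined by co(Ṽ)(q) = q·P(q̂) for 0 ≤ q < q̂ and co(Ṽ)(q) = V(q) - c for q ≥ q̂ is concave on [0, q̄], and co(Ṽ)(q) ≥ Ṽ(q) for all q ∈ [0, q̄]. -/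
open Set Filter MeasureTheory

noncomputable def V (P : ℝ → ℝ) (q : ℝ) : ℝ := ∫ z in (0:ℝ)..q, P z

/-! The candidate hull is the primitive `q ↦ ∫₀^q min (P z) (P q̂) dz`: below `q̂` the integrand
is the constant `P q̂`, above it is `P`, and the choice of `c` makes the two pieces agree. A
primitive of a continuous nonincreasing function is concave. It dominates `V - c` because
`V q - q P(q̂) = ∫₀^q (P - P q̂)` has a nonnegative integrand on `[0, q̂]`, so it is largest, equal
to `c`, at `q = q̂`. -/

theorem hasDerivAt_integral_of_continuousOn {f : ℝ → ℝ} {a b x : ℝ}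
    (hf : ContinuousOn f (Icc a b)) (hx : x ∈ Ioo a b) :
    HasDerivAt (fun y => ∫ t in a..y, f t) (f x) x := by
  refine intervalIntegral.integral_hasDerivAt_right ((hf.mono ?_).intervalIntegrable)
    ((hf.mono Ioo_subset_Icc_self).stronglyMeasurableAtFilter isOpen_Ioo x hx)
    (hf.continuousAt (Icc_mem_nhds hx.1 hx.2))
  exact uIcc_subset_Icc (left_mem_Icc.2 (hx.1.trans hx.2).le) (Ioo_subset_Icc_self hx)

theorem concaveOn_primitive_of_antitoneOn {f : ℝ → ℝ} {a b : ℝ}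
    (hf : ContinuousOn f (Icc a b)) (hanti : AntitoneOn f (Ioo a b)) :
    ConcaveOn ℝ (Icc a b) (fun x => ∫ t in a..x, f t) := by
  rcases lt_or_ge b a with hba | hab
  · simp [ConcaveOn, Icc_eq_empty_of_lt hba, convex_empty]
  have hderiv (x) (hx : x ∈ Ioo a b) := hasDerivAt_integral_of_continuousOn hf hx
  refine AntitoneOn.concaveOn_of_deriv (convex_Icc a b) ?_ ?_ ?_
  · have := intervalIntegral.continuousOn_primitive_interval' (μ := volume)
      (hf.intervalIntegrable_of_Icc hab) left_mem_uIcc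
    rwa [uIcc_of_le hab] at this
  · rw [interior_Icc]
    exact fun x hx => (hderiv x hx).differentiableAt.differentiableWithinAt
  · rw [interior_Icc]
    intro x hx y hy hxy
    simpa only [(hderiv x hx).deriv, (hderiv y hy).deriv] using hanti hx hy hxy

section ConcaveHull

variable {P : ℝ → ℝ} {qhat : ℝ}

theorem V_sub_mul_le_of_le (hP : ContinuousOn P (Icc 0 qhat))
    (hle : ∀ z ∈ Ioc 0 qhat, P qhat ≤ P z) {q : ℝ} (hq : q ∈ Icc 0 qhat) :
    V P q - q * P qhat ≤ V P qhat - qhat * P qhat := by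
  have hsub (x) (hx : x ∈ Icc 0 qhat) :
      V P x - x * P qhat = ∫ z in (0:ℝ)..x, (P z - P qhat) := by
    rw [intervalIntegral.integral_sub _ intervalIntegrable_const, intervalIntegral.integral_const,
      smul_eq_mul, sub_zero, V]
    exact (hP.mono (Icc_subset_Icc le_rfl hx.2)).intervalIntegrable_of_Icc hx.1
  rw [hsub q hq, hsub qhat (right_mem_Icc.2 (hq.1.trans hq.2))]
  refine intervalIntegral.integral_mono_interval le_rfl hq.1 hq.2 ?_
    ((hP.sub continuousOn_const).intervalIntegrable_of_Icc (hq.1.trans hq.2))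
  filter_upwards [ae_restrict_mem measurableSet_Ioc] with z hz
  exact sub_nonneg.2 (hle z hz)

theorem integral_min_eq_mul_of_le (hle : ∀ z ∈ Ioc 0 qhat, P qhat ≤ P z) {q : ℝ}
    (hq : q ∈ Icc 0 qhat) : ∫ z in (0:ℝ)..q, min (P z) (P qhat) = q * P qhat := by
  rw [intervalIntegral.integral_congr_ae (g := fun _ => P qhat), intervalIntegral.integral_const,
    smul_eq_mul, sub_zero]
  refine ae_of_all _ fun z hz => min_eq_right (hle z ?_)
  rw [uIoc_of_le hq.1] at hz
  exact ⟨hz.1, hz.2.trans hq.2⟩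

theorem integral_min_eq_V_sub_of_ge {q : ℝ} (hP : ContinuousOn P (Icc 0 q))
    (hle : ∀ z ∈ Ioc 0 qhat, P qhat ≤ P z) (hge : ∀ z ∈ Ioc qhat q, P z ≤ P qhat)
    (hqhat : 0 ≤ qhat) (hq : qhat ≤ q) :
    ∫ z in (0:ℝ)..q, min (P z) (P qhat) = V P q - (V P qhat - qhat * P qhat) := by
  have hint (x y) (hx : x ∈ Icc 0 q) (hy : y ∈ Icc 0 q) : IntervalIntegrable P volume x y :=
    (hP.mono (uIcc_subset_Icc hx hy)).intervalIntegrable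
  have hmin (x y) (hx : x ∈ Icc 0 q) (hy : y ∈ Icc 0 q) :
      IntervalIntegrable (fun z => min (P z) (P qhat)) volume x y :=
    ((hP.inf continuousOn_const).mono (uIcc_subset_Icc hx hy)).intervalIntegrable
  have h0 : (0:ℝ) ∈ Icc 0 q := ⟨le_rfl, hqhat.trans hq⟩
  have hqhat' : qhat ∈ Icc 0 q := ⟨hqhat, hq⟩
  have hq' : q ∈ Icc 0 q := ⟨hqhat.trans hq, le_rfl⟩
  have htail : ∫ z in qhat..q, min (P z) (P qhat) = ∫ z in qhat..q, P z := by
    refine intervalIntegral.integral_congr_ae (ae_of_all _ fun z hz => min_eq_left (hge z ?_))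
    rwa [uIoc_of_le hq] at hz
  rw [← intervalIntegral.integral_add_adjacent_intervals (hmin 0 qhat h0 hqhat')
      (hmin qhat q hqhat' hq'), integral_min_eq_mul_of_le hle (right_mem_Icc.2 hqhat), htail, V, V,
    ← intervalIntegral.integral_add_adjacent_intervals (hint 0 qhat h0 hqhat')
      (hint qhat q hqhat' hq')]
  ring

end ConcaveHull

theorem stmt1_general (P : ℝ → ℝ) (qbar c qhat : ℝ)
    (hPcont : ContinuousOn P (Icc 0 qbar))
    (hPanti : ∀ q q' : ℝ, 0 < q' → q' < q → q ≤ qbar → P q' > P q)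
    (hqhat : qhat ∈ Ioo 0 qbar)
    (hqhat_eq : V P qhat - qhat * P qhat = c) :
    ConcaveOn ℝ (Icc 0 qbar)
      (fun q => if q < qhat then q * P qhat else V P q - c) ∧
    ∀ q ∈ Icc 0 qbar,
      (if q < qhat then q * P qhat else V P q - c) ≥
        (if 0 < q then V P q - c else 0) := by
  subst hqhat_eq
  have hanti : AntitoneOn P (Ioc 0 qbar) := fun x hx y hy hxy =>
    hxy.eq_or_lt.elim (fun h => h ▸ le_rfl) fun h => (hPanti y x hx.1 h hy.2).le
  have hle : ∀ z ∈ Ioc 0 qhat, P qhat ≤ P z := fun z hz =>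
    hanti ⟨hz.1, hz.2.trans hqhat.2.le⟩ ⟨hqhat.1, hqhat.2.le⟩ hz.2
  have hconc := concaveOn_primitive_of_antitoneOn (f := fun z => min (P z) (P qhat))
    (hPcont.inf continuousOn_const) fun x hx y hy hxy =>
      min_le_min_right _ (hanti (Ioo_subset_Ioc_self hx) (Ioo_subset_Ioc_self hy) hxy)
  refine ⟨hconc.congr fun q hq => ?_, fun q hq => ?_⟩
  · split_ifs with h
    · exact integral_min_eq_mul_of_le hle ⟨hq.1, h.le⟩
    · refine integral_min_eq_V_sub_of_ge (hPcont.mono (Icc_subset_Icc le_rfl hq.2)) hle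
        (fun z hz => hanti ⟨hqhat.1, hqhat.2.le⟩ ⟨hqhat.1.trans hz.1, hz.2.trans hq.2⟩ hz.1.le)
        hqhat.1.le (not_lt.1 h)
  · split_ifs with h h0 h0
    · have := V_sub_mul_le_of_le (hPcont.mono (Icc_subset_Icc le_rfl hqhat.2.le)) hle ⟨hq.1, h.le⟩
      linarith
    · simp [le_antisymm (not_lt.1 h0) hq.1]
    · exact le_rfl
    · exact absurd (hqhat.1.trans_le (not_lt.1 h)) h0

theorem stmt1 (P : ℝ → ℝ) (qbar c qhat : ℝ) (hqbar : 0 < qbar) (hc : 0 < c)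
    (hPcont : ContinuousOn P (Icc 0 qbar))
    (hPanti : ∀ q q' : ℝ, 0 < q' → q' < q → q ≤ qbar → P q' > P q)
    (hqhat : qhat ∈ Ioo 0 qbar)
    (hqhat_eq : V P qhat - qhat * P qhat = c) :
    ConcaveOn ℝ (Icc 0 qbar)
      (fun q => if q < qhat then q * P qhat else V P q - c) ∧
    ∀ q ∈ Icc 0 qbar,
      (if q < qhat then q * P qhat else V P q - c) ≥
        (if 0 < q then V P q - c else 0) :=
  stmt1_general P qbar c qhat hPcont hPanti hqhat hqhat_eq
end

section
/- Let P be continuous and strictly decreasing with P(q̄) = 0, V(q) = ∫₀^q P(z) dz, c > 0, and q̂ the quantity floor (V(q̂) - q̂ P(q̂) = c). For any q ∈ (0, q̂) we have (q/q̂)·(V(q̂) - c) ≥ V(q) - c, with strict inequality if q ≠ q̂. That is, operating with probability q/q̂ at quantity q̂ yields weakly higher expected consumer value net of fixed cost than operating with probability one at quantity q < q̂. -/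
open Set Filter MeasureTheory

theorem StrictAntiOn.sub_mul_lt_intervalIntegral {P : ℝ → ℝ} {x y : ℝ} (hxy : x < y)
    (hcont : ContinuousOn P (Icc x y)) (hanti : StrictAntiOn P (Icc x y)) :
    (y - x) * P y < ∫ z in x..y, P z := by
  have hint : IntervalIntegrable P volume x y :=
    (hcont.mono (uIcc_of_le hxy.le).subset).intervalIntegrable
  have hpos : 0 < ∫ z in x..y, (P z - P y) := by
    refine intervalIntegral.intervalIntegral_pos_of_pos_on
      (hint.sub intervalIntegrable_const) (fun z hz => ?_) hxy
    exact sub_pos.mpr (hanti (Ioo_subset_Icc_self hz) (right_mem_Icc.mpr hxy.le) hz.2)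
  rw [intervalIntegral.integral_sub hint intervalIntegrable_const,
    intervalIntegral.integral_const, smul_eq_mul] at hpos
  linarith

theorem V_add_sub_mul_lt {P : ℝ → ℝ} {q q' : ℝ} (hq : 0 ≤ q) (hqq' : q < q')
    (hcont : ContinuousOn P (Icc 0 q')) (hanti : StrictAntiOn P (Icc q q')) :
    V P q + (q' - q) * P q' < V P q' := by
  have hint : ∀ a b, a ∈ Icc 0 q' → b ∈ Icc 0 q' → IntervalIntegrable P volume a b :=
    fun a b ha hb => (hcont.mono (uIcc_subset_Icc ha hb)).intervalIntegrable
  have hq_mem : q ∈ Icc 0 q' := ⟨hq, hqq'.le⟩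
  have hq'_mem : q' ∈ Icc 0 q' := ⟨hq.trans hqq'.le, le_rfl⟩
  have hsplit : V P q + ∫ z in q..q', P z = V P q' :=
    intervalIntegral.integral_add_adjacent_intervals
      (hint 0 q (left_mem_Icc.mpr hq'_mem.1) hq_mem) (hint q q' hq_mem hq'_mem)
  have hlt := StrictAntiOn.sub_mul_lt_intervalIntegral hqq'
    (hcont.mono (Icc_subset_Icc_left hq)) hanti
  linarith

theorem stmt2_general (P : ℝ → ℝ) (qbar c qhat : ℝ)
    (hPcont : ContinuousOn P (Icc 0 qbar))
    (hPanti : StrictAntiOn P (Icc 0 qbar))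
    (hqhat : qhat ∈ Ioo 0 qbar)
    (hqhat_eq : V P qhat - qhat * P qhat = c) :
    ∀ q ∈ Ioo 0 qhat,
      (q / qhat) * (V P qhat - c) ≥ V P q - c ∧
      (q ≠ qhat → (q / qhat) * (V P qhat - c) > V P q - c) := by
  rintro q ⟨hq0, hq_lt⟩
  have hqhat_le : qhat ≤ qbar := hqhat.2.le
  have hV_lt := V_add_sub_mul_lt hq0.le hq_lt
    (hPcont.mono (Icc_subset_Icc_right hqhat_le))
    (hPanti.mono (Icc_subset_Icc hq0.le hqhat_le))
  have hscaled : (q / qhat) * (V P qhat - c) = q * P qhat := by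
    rw [← hqhat_eq, sub_sub_cancel]
    field_simp [hqhat.1.ne']
  have hstrict : (q / qhat) * (V P qhat - c) > V P q - c := by
    rw [hscaled]
    linarith
  exact ⟨hstrict.le, fun _ => hstrict⟩

theorem stmt2 (P : ℝ → ℝ) (qbar c qhat : ℝ) (hqbar : 0 < qbar) (hc : 0 < c)
    (hPcont : ContinuousOn P (Icc 0 qbar))
    (hPanti : StrictAntiOn P (Icc 0 qbar))
    (hPqbar : P qbar = 0)
    (hA2 : V P qbar - qbar * P qbar > c)
    (hqhat : qhat ∈ Ioo 0 qbar)
    (hqhat_eq : V P qhat - qhat * P qhat = c) :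
    ∀ q ∈ Ioo 0 qhat,
      (q / qhat) * (V P qhat - c) ≥ V P q - c ∧
      (q ≠ qhat → (q / qhat) * (V P qhat - c) > V P q - c) :=
  stmt2_general P qbar c qhat hPcont hPanti hqhat hqhat_eq
end

section
/- Suppose Δ : [0, q̄] → ℝ is defined by Δ(q) = V(q) - q·P(q) - c where P is continuous and strictly decreasing with P(q̄) = 0, V(q) = ∫₀^q P(z) dz, and suppose V(P⁻¹(θ̄)) - c - θ̄·P⁻¹(θ̄) > 0 (assumption A2). Let q̂ be the unique root of Δ and q_e(θ) = P⁻¹(θ) for θ ∈ [θ̲, θ̄]. Then q_e(θ) > q̂ for all θ ∈ [θ̲, θ̄], and V(q̂) - c - θ·q̂ > 0 for all θ ∈ [θ̲, θ̄]. -/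
/-!
The gap `Δ(q) = V(q) - q P(q)` is strictly increasing, since `V(b) - V(a) = ∫ₐᵇ P > (b - a) P(b)`
for a strictly decreasing `P`. At `q = q_e(θ)` the gap equals `TS(θ, q) + c = V(q) - θ q`,
which only grows when passing from `q_e(θ̄)` to `q_e(θ) ≥ q_e(θ̄)` and from `θ̄` to
`θ ≤ θ̄`; so by A2 it exceeds `c = Δ(q̂)`, giving `q_e(θ) > q̂`. Then
`V(q̂) - c - θ q̂ = q̂ (P(q̂) - θ) > 0` because `P(q̂) > P(q_e(θ)) = θ`.
-/

open Set Filter MeasureTheory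

section Integral

variable {P : ℝ → ℝ} {a b : ℝ}

theorem mul_le_integral_of_le_on (hab : a ≤ b) (hP : ContinuousOn P (Icc a b)) {t : ℝ}
    (ht : ∀ x ∈ Icc a b, t ≤ P x) : (b - a) * t ≤ ∫ x in a..b, P x := by
  have := intervalIntegral.integral_mono_on hab (intervalIntegrable_const (μ := volume))
    (hP.intervalIntegrable_of_Icc hab) ht
  simpa [mul_comm] using this

theorem mul_lt_integral_of_strictAntiOn (hab : a < b) (hP : ContinuousOn P (Icc a b))
    (hanti : StrictAntiOn P (Icc a b)) : (b - a) * P b < ∫ x in a..b, P x := by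
  have hpos : 0 < ∫ x in a..b, (P x - P b) :=
    intervalIntegral.intervalIntegral_pos_of_pos_on
      ((hP.intervalIntegrable_of_Icc hab.le).sub intervalIntegrable_const)
      (fun x hx => sub_pos.2 <| hanti (Ioo_subset_Icc_self hx)
        (right_mem_Icc.2 hab.le) hx.2) hab
  rw [intervalIntegral.integral_sub (hP.intervalIntegrable_of_Icc hab.le)
    intervalIntegrable_const, intervalIntegral.integral_const, smul_eq_mul] at hpos
  linarith

end Integral

section Surplus

variable {P : ℝ → ℝ} {qbar : ℝ}

theorem V_sub_V_eq_integral (hP : ContinuousOn P (Icc 0 qbar)) {a b : ℝ}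
    (ha : a ∈ Icc 0 qbar) (hb : b ∈ Icc 0 qbar) : V P b - V P a = ∫ x in a..b, P x := by
  have h0 : (0 : ℝ) ∈ Icc 0 qbar := left_mem_Icc.2 (ha.1.trans ha.2)
  exact intervalIntegral.integral_interval_sub_left
    ((hP.mono (uIcc_subset_Icc h0 hb)).intervalIntegrable)
    ((hP.mono (uIcc_subset_Icc h0 ha)).intervalIntegrable)

theorem strictMonoOn_V_sub_mul (hP : ContinuousOn P (Icc 0 qbar))
    (hanti : StrictAntiOn P (Icc 0 qbar)) :
    StrictMonoOn (fun q => V P q - q * P q) (Icc 0 qbar) := by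
  intro a ha b hb hab
  have hsub : Icc a b ⊆ Icc 0 qbar := Icc_subset_Icc ha.1 hb.2
  have hint := mul_lt_integral_of_strictAntiOn hab (hP.mono hsub) (hanti.mono hsub)
  have hPab : P b ≤ P a := (hanti ha hb hab).le
  have : a * P b ≤ a * P a := mul_le_mul_of_nonneg_left hPab ha.1
  show V P a - a * P a < V P b - b * P b
  linarith [V_sub_V_eq_integral hP ha hb]

theorem V_sub_mul_le_of_le_apply (hP : ContinuousOn P (Icc 0 qbar))
    (hanti : StrictAntiOn P (Icc 0 qbar)) {a b θ : ℝ} (ha : a ∈ Icc 0 qbar)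
    (hb : b ∈ Icc 0 qbar) (hab : a ≤ b) (hθ : θ ≤ P b) : V P a - θ * a ≤ V P b - θ * b := by
  have hsub : Icc a b ⊆ Icc 0 qbar := Icc_subset_Icc ha.1 hb.2
  have hint := mul_le_integral_of_le_on hab (hP.mono hsub) (t := θ) fun x hx =>
    hθ.trans <| hanti.antitoneOn (hsub hx) hb hx.2
  linarith [V_sub_V_eq_integral hP ha hb]

end Surplus

theorem stmt4_general (θl θh qbar c : ℝ) (P qe : ℝ → ℝ) (qhat : ℝ)
    (hPcont : ContinuousOn P (Icc 0 qbar))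
    (hPanti : StrictAntiOn P (Icc 0 qbar))
    (hqe : ∀ θ ∈ Icc θl θh, qe θ ∈ Icc 0 qbar ∧ P (qe θ) = θ)
    (hA2 : V P (qe θh) - c - θh * qe θh > 0)
    (hqhat_mem : qhat ∈ Ioo 0 qbar)
    (hqhat_eq : V P qhat - qhat * P qhat = c) :
    ∀ θ ∈ Icc θl θh, qe θ > qhat ∧ V P qhat - c - θ * qhat > 0 := by
  intro θ hθ
  obtain ⟨hqθ, hPθ⟩ := hqe θ hθ
  obtain ⟨hqh, hPh⟩ := hqe θh ⟨hθ.1.trans hθ.2, le_rfl⟩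
  have hqhat : qhat ∈ Icc 0 qbar := Ioo_subset_Icc_self hqhat_mem
  have hqe_le : qe θh ≤ qe θ := (hPanti.le_iff_ge hqθ hqh).1 (by rw [hPθ, hPh]; exact hθ.2)
  have hgap : V P qhat - qhat * P qhat < V P (qe θ) - qe θ * P (qe θ) :=
    calc V P qhat - qhat * P qhat < V P (qe θh) - θh * qe θh := by linarith
      _ ≤ V P (qe θh) - θ * qe θh := by nlinarith [hθ.2, hqh.1]
      _ ≤ V P (qe θ) - θ * qe θ :=
        V_sub_mul_le_of_le_apply hPcont hPanti hqh hqθ hqe_le hPθ.ge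
      _ = V P (qe θ) - qe θ * P (qe θ) := by rw [hPθ, mul_comm]
  have hqhat_lt : qhat < qe θ := ((strictMonoOn_V_sub_mul hPcont hPanti).lt_iff_lt hqhat hqθ).1 hgap
  refine ⟨hqhat_lt, ?_⟩
  have hθ_lt : θ < P qhat := hPθ ▸ hPanti hqhat hqθ hqhat_lt
  nlinarith [hqhat_mem.1]

theorem stmt4 (θl θh qbar c : ℝ) (P qe : ℝ → ℝ) (qhat : ℝ)
    (h0 : 0 < θl) (hlt : θl < θh) (hqbar : 0 < qbar) (hc : 0 < c)
    (hPcont : ContinuousOn P (Icc 0 qbar))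
    (hPanti : StrictAntiOn P (Icc 0 qbar))
    (hPqbar : P qbar = 0)
    (hqe : ∀ θ ∈ Icc θl θh, qe θ ∈ Icc 0 qbar ∧ P (qe θ) = θ)
    (hA2 : V P (qe θh) - c - θh * qe θh > 0)
    (hqhat_mem : qhat ∈ Ioo 0 qbar)
    (hqhat_eq : V P qhat - qhat * P qhat = c) :
    ∀ θ ∈ Icc θl θh, qe θ > qhat ∧ V P qhat - c - θ * qhat > 0 :=
  stmt4_general θl θh qbar c P qe qhat hPcont hPanti hqe hA2 hqhat_mem hqhat_eq
end

section
/- If P is twice continuously differentiable (in addition to being continuous and strictly decreasing with P(q̄) = 0 and satisfying A2), then the efficient mechanism M_e = (q_e, u_e) — where every type operates with probability 1, produces q_e(θ) = P⁻¹(θ), and u_e(θ) = ∫_θ^θ̄ q_e(y)dy — is dominated: there exists an IC and IR mechanism M̃ with RS_α(θ, M̃) ≥ RS_α(θ, M_e) for all θ and strict inequality for some θ. -/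
/-
Idea: starting from the efficient mechanism, lower the quantity by the linear amount
`κ (θh - θ)`. Since the rent is the integral of the quantity from `θ` to `θh`, this saves
`κ (θh - θ)² / 2` in rent, which the regulator values at the rate `1 - α > 0`. Because `qe` is
efficient and `P` is Lipschitz (being `C¹` on a compact interval), the lost surplus is only of
second order, at most `K κ² (θh - θ)² / 2`. For small `κ > 0` the gain dominates, strictly for
`θ < θh`; a Lipschitz bound for `P` also bounds how fast `qe` falls, which keeps the distorted
quantity decreasing.
-/

open Set Filter MeasureTheory

/-- Incentive compatibility: `q·r` decreasing plus the envelope formula. -/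
def IC (θl θh : ℝ) (r q u : ℝ → ℝ) : Prop :=
  AntitoneOn (fun θ => q θ * r θ) (Set.Icc θl θh) ∧
  ∀ θ ∈ Set.Icc θl θh, u θ = u θh + ∫ z in θ..θh, q z * r z

/-- Individual rationality. -/
def IR (θh : ℝ) (u : ℝ → ℝ) : Prop := 0 ≤ u θh

/-- Feasibility of the operation and quantity rules. -/
def Valid (θl θh qbar : ℝ) (r q : ℝ → ℝ) : Prop :=
  (∀ θ ∈ Set.Icc θl θh, r θ ∈ Set.Icc (0:ℝ) 1) ∧
  ∀ θ ∈ Set.Icc θl θh, q θ ∈ Set.Icc (0:ℝ) qbar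

/-- Regulator's surplus at type θ with welfare weight α. -/
noncomputable def RS (P : ℝ → ℝ) (c α : ℝ) (r q u : ℝ → ℝ) (θ : ℝ) : ℝ :=
  r θ * (V P (q θ) - c - θ * q θ) - (1 - α) * u θ

/-- Floor-randomized mechanism with quantity floor `qhat`. -/
def FloorRandomized (θl θh qhat : ℝ) (r q u : ℝ → ℝ) : Prop :=
  IC θl θh r q u ∧ IR θh u ∧ u θh = 0 ∧
  ∃ T1 T01 T0 : Set ℝ,
    T1 ∪ T01 ∪ T0 = Set.Icc θl θh ∧
    (∀ x ∈ T01, ∀ y ∈ T1, y < x) ∧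
    (∀ x ∈ T0, ∀ y ∈ T01, y < x) ∧
    (∀ x ∈ T0, ∀ y ∈ T1, y < x) ∧
    T1.OrdConnected ∧ T01.OrdConnected ∧ T0.OrdConnected ∧
    (∀ θ ∈ T1, qhat ≤ q θ ∧ r θ = 1) ∧
    (∀ θ ∈ T01, q θ = qhat ∧ r θ ∈ Set.Ioo (0:ℝ) 1) ∧
    (∀ θ ∈ T0, q θ = 0 ∧ r θ = 0)

/-- Quantity rule of the floor-randomized transformation of an effective quantity `qt`. -/
noncomputable def qT (qhat : ℝ) (qt : ℝ → ℝ) (θ : ℝ) : ℝ :=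
  if 0 < qt θ then max (qt θ) qhat else 0

/-- Operation rule of the floor-randomized transformation. -/
noncomputable def rT (qhat : ℝ) (qt : ℝ → ℝ) (θ : ℝ) : ℝ :=
  if 0 < qt θ then min (qt θ / qhat) 1 else 0

/-- Rent of the floor-randomized transformation. -/
noncomputable def uT (θh : ℝ) (qt : ℝ → ℝ) (θ : ℝ) : ℝ := ∫ z in θ..θh, qt z

/-- Mechanism `(r', q', u')` dominates `(r, q, u)`. -/
def Dominates (θl θh : ℝ) (P : ℝ → ℝ) (c α : ℝ) (r' q' u' r q u : ℝ → ℝ) : Prop :=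
  (∀ θ ∈ Set.Icc θl θh, RS P c α r q u θ ≤ RS P c α r' q' u' θ) ∧
  ∃ θ ∈ Set.Icc θl θh, RS P c α r q u θ < RS P c α r' q' u' θ

/-- Undominated IC and IR mechanism. -/
def Undominated (θl θh qbar : ℝ) (P : ℝ → ℝ) (c α : ℝ) (r q u : ℝ → ℝ) : Prop :=
  Valid θl θh qbar r q ∧ IC θl θh r q u ∧ IR θh u ∧
  ¬ ∃ r' q' u', Valid θl θh qbar r' q' ∧ IC θl θh r' q' u' ∧ IR θh u' ∧
      Dominates θl θh P c α r' q' u' r q u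

/-- Left-continuity of the effective quantity `q·r`. -/
def LeftCont (θl θh : ℝ) (r q : ℝ → ℝ) : Prop :=
  ∀ θ ∈ Set.Ioc θl θh,
    Filter.Tendsto (fun z => q z * r z) (nhdsWithin θ (Set.Iio θ)) (nhds (q θ * r θ))

/-- Downward distortion with respect to the efficient quantity rule `qe`. -/
def DD (θl θh : ℝ) (qe q : ℝ → ℝ) : Prop :=
  (∀ θ ∈ Set.Icc θl θh, q θ ≤ qe θ) ∧ q θl = qe θl

open scoped NNReal Topology
open intervalIntegral

theorem antitoneOn_of_strictAntiOn_of_rightInverse {α β : Type*} [LinearOrder α] [LinearOrder β]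
    {P : β → α} {g : α → β} {s : Set α} {t : Set β} (hP : StrictAntiOn P t)
    (hg : MapsTo g s t) (hPg : ∀ x ∈ s, P (g x) = x) : AntitoneOn g s := by
  intro x hx y hy hxy
  by_contra! h
  have := hP (hg hx) (hg hy) h
  rw [hPg x hx, hPg y hy] at this
  exact this.not_ge hxy

theorem sub_le_mul_sub_of_lipschitzOnWith_of_rightInverse {P g : ℝ → ℝ} {s t : Set ℝ} {K : ℝ≥0}
    (hP : LipschitzOnWith K P t) (hg : MapsTo g s t) (hPg : ∀ x ∈ s, P (g x) = x)
    (hanti : AntitoneOn g s) {x y : ℝ} (hx : x ∈ s) (hy : y ∈ s) (hxy : x ≤ y) :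
    y - x ≤ K * (g x - g y) := by
  have := hP.dist_le_mul (g y) (hg hy) (g x) (hg hx)
  rwa [hPg y hy, hPg x hx, Real.dist_eq, Real.dist_eq, abs_of_nonneg (sub_nonneg.2 hxy),
    abs_sub_comm, abs_of_nonneg (sub_nonneg.2 (hanti hx hy hxy))] at this

/-- `b` is the efficient quantity for the type `P b`; lowering it to `a` loses only a second-order
amount of surplus. -/
theorem V_sub_V_sub_mul_le {P : ℝ → ℝ} {qbar a b : ℝ} {K : ℝ≥0}
    (hP : LipschitzOnWith K P (Icc 0 qbar)) (ha : 0 ≤ a) (hab : a ≤ b) (hb : b ≤ qbar) :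
    V P b - V P a - P b * (b - a) ≤ K * (b - a) ^ 2 / 2 := by
  have hint : ∀ x ∈ Icc 0 qbar, IntervalIntegrable P volume 0 x := fun x hx =>
    (hP.continuousOn.mono
      (by rw [uIcc_of_le hx.1]; exact Icc_subset_Icc le_rfl hx.2)).intervalIntegrable
  have hint_ab : IntervalIntegrable P volume a b :=
    (hint a ⟨ha, hab.trans hb⟩).symm.trans (hint b ⟨ha.trans hab, hb⟩)
  have hlin : ∫ z in a..b, (K : ℝ) * (b - z) = K * (b - a) ^ 2 / 2 := by
    simp only [intervalIntegral.integral_const_mul, integral_comp_sub_left fun z => z, integral_id]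
    ring
  calc V P b - V P a - P b * (b - a)
      = ∫ z in a..b, (P z - P b) := by
        rw [V, V, integral_interval_sub_left (hint b ⟨ha.trans hab, hb⟩)
          (hint a ⟨ha, hab.trans hb⟩), integral_sub hint_ab intervalIntegrable_const,
          intervalIntegral.integral_const, smul_eq_mul, mul_comm]
    _ ≤ ∫ z in a..b, (K : ℝ) * (b - z) := by
        refine integral_mono_on hab (hint_ab.sub intervalIntegrable_const)
          (Continuous.intervalIntegrable (by fun_prop) _ _) fun z hz => ?_
        have := hP.dist_le_mul z ⟨ha.trans hz.1, hz.2.trans hb⟩ b ⟨ha.trans hab, hb⟩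
        rw [Real.dist_eq, Real.dist_eq, abs_of_nonpos (sub_nonpos.2 hz.2)] at this
        linarith [le_abs_self (P z - P b)]
    _ = K * (b - a) ^ 2 / 2 := hlin

theorem eventually_nhdsGT_mul_lt {a : ℝ} (K : ℝ) (ha : 0 < a) :
    ∀ᶠ κ in 𝓝[>] (0 : ℝ), K * κ < a :=
  nhdsWithin_le_nhds <|
    ((continuous_const.mul continuous_id).tendsto' 0 0 (by simp)).eventually_lt_const ha

noncomputable def distortedQuantity (qe : ℝ → ℝ) (θh κ : ℝ) (θ : ℝ) : ℝ := qe θ - κ * (θh - θ)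

section DistortedQuantity

variable {qe : ℝ → ℝ} {θl θh κ : ℝ}

theorem antitoneOn_distortedQuantity {P : ℝ → ℝ} {t : Set ℝ} {K : ℝ≥0}
    (hP : LipschitzOnWith K P t) (hqe : MapsTo qe (Icc θl θh) t)
    (hPqe : ∀ θ ∈ Icc θl θh, P (qe θ) = θ) (hanti : AntitoneOn qe (Icc θl θh))
    (hκ : 0 ≤ κ) (hKκ : K * κ ≤ 1) :
    AntitoneOn (distortedQuantity qe θh κ) (Icc θl θh) := by
  intro x hx y hy hxy
  have hlip := sub_le_mul_sub_of_lipschitzOnWith_of_rightInverse hP hqe hPqe hanti hx hy hxy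
  have hdrop : 0 ≤ qe x - qe y := sub_nonneg.2 (hanti hx hy hxy)
  have : κ * (y - x) ≤ qe x - qe y := by
    calc κ * (y - x) ≤ κ * (K * (qe x - qe y)) := mul_le_mul_of_nonneg_left hlip hκ
      _ = (K * κ) * (qe x - qe y) := by ring
      _ ≤ qe x - qe y := mul_le_of_le_one_left hdrop hKκ
  simp only [distortedQuantity]
  linarith

theorem distortedQuantity_mem_Icc {qbar θ : ℝ} (hanti : AntitoneOn qe (Icc θl θh))
    (hqe : qe θ ≤ qbar) (hκ : 0 ≤ κ) (hκθ : κ * (θh - θl) ≤ qe θh)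
    (hθ : θ ∈ Icc θl θh) : distortedQuantity qe θh κ θ ∈ Icc 0 qbar := by
  have htop : qe θh ≤ qe θ := hanti hθ (right_mem_Icc.2 (hθ.1.trans hθ.2)) hθ.2
  have : κ * (θh - θ) ≤ κ * (θh - θl) := mul_le_mul_of_nonneg_left (by linarith [hθ.1]) hκ
  have : 0 ≤ κ * (θh - θ) := mul_nonneg hκ (sub_nonneg.2 hθ.2)
  constructor <;> simp only [distortedQuantity] <;> linarith

theorem integral_distortedQuantity {θ : ℝ} (hqe : IntervalIntegrable qe volume θ θh) :
    ∫ z in θ..θh, distortedQuantity qe θh κ z = (∫ z in θ..θh, qe z) - κ * (θh - θ) ^ 2 / 2 := by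
  simp only [distortedQuantity]
  rw [integral_sub hqe (Continuous.intervalIntegrable (by fun_prop) _ _),
    intervalIntegral.integral_const_mul, integral_comp_sub_left (fun z => z), integral_id]
  ring

theorem RS_efficient_add_le_RS_distorted {P : ℝ → ℝ} {qbar c α θ : ℝ} {K : ℝ≥0}
    (hP : LipschitzOnWith K P (Icc 0 qbar)) (hθ : θ ∈ Icc θl θh)
    (hqe : qe θ ≤ qbar) (hPqe : P (qe θ) = θ) (hint : IntervalIntegrable qe volume θ θh)
    (hdist : 0 ≤ distortedQuantity qe θh κ θ) (hκ : 0 ≤ κ) :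
    RS P c α (fun _ => 1) qe (fun θ => ∫ y in θ..θh, qe y) θ
        + κ * (θh - θ) ^ 2 * (1 - α - K * κ) / 2
      ≤ RS P c α (fun _ => 1) (distortedQuantity qe θh κ)
          (fun θ => ∫ z in θ..θh, distortedQuantity qe θh κ z) θ := by
  have hle : distortedQuantity qe θh κ θ ≤ qe θ := by
    simp only [distortedQuantity]
    linarith [mul_nonneg hκ (sub_nonneg.2 hθ.2)]
  have hloss := V_sub_V_sub_mul_le hP hdist hle hqe
  have hgap : qe θ - distortedQuantity qe θh κ θ = κ * (θh - θ) := by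
    simp only [distortedQuantity]; ring
  rw [hgap, hPqe] at hloss
  simp only [RS, one_mul]
  rw [integral_distortedQuantity hint]
  have : θ * qe θ - θ * distortedQuantity qe θh κ θ = θ * (κ * (θh - θ)) := by
    rw [← mul_sub, hgap]
  nlinarith

end DistortedQuantity

theorem stmt11_general (θl θh qbar c α : ℝ) (P qe : ℝ → ℝ)
    (hlt : θl < θh) (hc : 0 < c)
    (hα0 : 0 ≤ α) (hα1 : α < 1)
    (hPanti : StrictAntiOn P (Icc 0 qbar))
    (hPC2 : ContDiffOn ℝ 2 P (Icc 0 qbar))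
    (hqe : ∀ θ ∈ Icc θl θh, qe θ ∈ Icc 0 qbar ∧ P (qe θ) = θ)
    (hA2 : V P (qe θh) - c - θh * qe θh > 0) :
    ∃ r' q' u' : ℝ → ℝ,
      Valid θl θh qbar r' q' ∧ IC θl θh r' q' u' ∧ IR θh u' ∧
      Dominates θl θh P c α r' q' u'
        (fun _ => 1) qe (fun θ => ∫ y in θ..θh, qe y) := by
  obtain ⟨K, hP⟩ := hPC2.exists_lipschitzOnWith two_ne_zero (convex_Icc 0 qbar) isCompact_Icc
  have hmaps : MapsTo qe (Icc θl θh) (Icc 0 qbar) := fun θ hθ => (hqe θ hθ).1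
  have hPqe : ∀ θ ∈ Icc θl θh, P (qe θ) = θ := fun θ hθ => (hqe θ hθ).2
  have hanti := antitoneOn_of_strictAntiOn_of_rightInverse hPanti hmaps hPqe
  have hint : ∀ θ ∈ Icc θl θh, IntervalIntegrable qe volume θ θh := fun θ hθ =>
    (hanti.mono (by rw [uIcc_of_le hθ.2]; exact Icc_subset_Icc hθ.1 le_rfl)).intervalIntegrable
  have htop : 0 < qe θh := (hmaps (right_mem_Icc.2 hlt.le)).1.lt_of_ne fun h => by
    simp only [← h, V, integral_same, mul_zero] at hA2; linarith
  obtain ⟨κ, ⟨hKκ, hκθ⟩, hκ⟩ : ∃ κ, (K * κ < 1 - α ∧ (θh - θl) * κ < qe θh) ∧ 0 < κ :=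
    ((eventually_nhdsGT_mul_lt K (sub_pos.2 hα1)).and
      (eventually_nhdsGT_mul_lt (θh - θl) htop) |>.and self_mem_nhdsWithin).exists
  have hq' : ∀ θ ∈ Icc θl θh, distortedQuantity qe θh κ θ ∈ Icc 0 qbar := fun θ hθ =>
    distortedQuantity_mem_Icc hanti (hmaps hθ).2 hκ.le (by linarith) hθ
  have hRS := fun θ hθ => RS_efficient_add_le_RS_distorted (c := c) (α := α) hP hθ (hmaps hθ).2
    (hPqe θ hθ) (hint θ hθ) (hq' θ hθ).1 hκ.le
  have hrate : 0 < 1 - α - K * κ := by linarith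
  refine ⟨fun _ => 1, distortedQuantity qe θh κ, fun θ => ∫ z in θ..θh, distortedQuantity qe θh κ z,
    ⟨fun _ _ => ⟨zero_le_one, le_rfl⟩, hq'⟩, ⟨?_, fun θ _ => by simp⟩, by simp [IR],
    fun θ hθ => ?_, θl, left_mem_Icc.2 hlt.le, ?_⟩
  · simpa using antitoneOn_distortedQuantity hP hmaps hPqe hanti hκ.le (by linarith)
  · have : 0 ≤ κ * (θh - θ) ^ 2 * (1 - α - K * κ) / 2 := by positivity
    linarith [hRS θ hθ]
  · have : 0 < κ * (θh - θl) ^ 2 * (1 - α - K * κ) / 2 := by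
      have := sub_pos.2 hlt
      positivity
    linarith [hRS θl (left_mem_Icc.2 hlt.le)]

theorem stmt11 (θl θh qbar c α : ℝ) (P qe : ℝ → ℝ)
    (h0 : 0 < θl) (hlt : θl < θh) (hqbar : 0 < qbar) (hc : 0 < c)
    (hα0 : 0 ≤ α) (hα1 : α < 1)
    (hPcont : ContinuousOn P (Icc 0 qbar))
    (hPanti : StrictAntiOn P (Icc 0 qbar))
    (hPqbar : P qbar = 0)
    (hPC2 : ContDiffOn ℝ 2 P (Icc 0 qbar))
    (hqe : ∀ θ ∈ Icc θl θh, qe θ ∈ Icc 0 qbar ∧ P (qe θ) = θ)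
    (hA2 : V P (qe θh) - c - θh * qe θh > 0) :
    ∃ r' q' u' : ℝ → ℝ,
      Valid θl θh qbar r' q' ∧ IC θl θh r' q' u' ∧ IR θh u' ∧
      Dominates θl θh P c α r' q' u'
        (fun _ => 1) qe (fun θ => ∫ y in θ..θh, qe y) :=
  stmt11_general θl θh qbar c α P qe hlt hc hα0 hα1 hPanti hPC2 hqe hA2
end

section
/- Let M = (r, q, u) be a floor-randomized mechanism satisfying downward distortion (q(θ) ≤ P⁻¹(θ) for all θ). Then the pointwise regulator surplus θ ↦ RS_α(θ, M) = r(θ)(V(q(θ)) - c - θq(θ)) - (1-α)u(θ) is a decreasing and non-negative function of θ. Consequently, for priors G, G' on Θ with G' first-order stochastically dominating G, the expected regulator surplus satisfies ∫ RS_α(θ, M) dG(θ) ≥ ∫ RS_α(θ, M) dG'(θ). -/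
open Set Filter MeasureTheory

/-!
Write `W θ = allocSurplus P c r q θ θ`, so that `RS = W - (1 - α) u` with
`u θ = ∫_θ^θh q r`. Downward distortion (`θ ≤ P (q θ)`) and the floor equation
`V qhat - qhat * P qhat = c` imply that no type gains gross surplus by taking the allocation of
a higher type `y`, i.e. `W x - W y ≥ (y - x) q(y) r(y)`. Summing this over fine partitions of
`[x, y]` gives `W x - W y ≥ ∫_x^y q r = u x - u y ≥ (1 - α) (u x - u y)`, so `RS` is decreasing.
Assumption A2 forces `θh < P qhat`, so the floor allocation has nonnegative surplus and
`RS θh = W θh ≥ 0`. Finally, by the layer-cake formula the expectation of a nonnegative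
decreasing function is an integral of masses of lower sets, and FOSD gives each of these at
least as much mass under `G` as under `G'`.
-/

open Topology ProbabilityTheory

theorem le_of_forall_sub_le_mul_sub {F m : ℝ → ℝ} {a b : ℝ} (hab : a ≤ b)
    (h : ∀ x ∈ Icc a b, ∀ y ∈ Icc a b, x ≤ y → F y - F x ≤ (y - x) * (m x - m y)) :
    F b ≤ F a := by
  -- On the uniform partition of mesh `δ` the right-hand sides telescope to `δ * (m a - m b)`.
  have hpartition : ∀ n : ℕ, 0 < n → F b - F a ≤ (b - a) / n * (m a - m b) := by
    intro n hn
    set δ := (b - a) / n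
    set z : ℕ → ℝ := fun i => a + i * δ
    have hδ : 0 ≤ δ := div_nonneg (sub_nonneg.2 hab) n.cast_nonneg
    have hz0 : z 0 = a := by simp [z]
    have hzn : z n = b := by simp only [z, δ]; field_simp; ring
    have hstep : ∀ i, z (i + 1) - z i = δ := fun i => by simp only [z]; push_cast; ring
    have hz_mem : ∀ i ≤ n, z i ∈ Icc a b := fun i hi =>
      ⟨le_add_of_nonneg_right (by positivity), hzn ▸ by simp only [z]; gcongr⟩
    calc F b - F a = ∑ i ∈ Finset.range n, (F (z (i + 1)) - F (z i)) := by
          rw [Finset.sum_range_sub (fun i => F (z i)), hz0, hzn]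
      _ ≤ ∑ i ∈ Finset.range n, δ * (m (z i) - m (z (i + 1))) := by
          refine Finset.sum_le_sum fun i hi => ?_
          have hi := Finset.mem_range.1 hi
          simpa only [hstep] using
            h _ (hz_mem i hi.le) _ (hz_mem (i + 1) hi) (by linarith [hstep i])
      _ = δ * (m a - m b) := by
          rw [← Finset.mul_sum, Finset.sum_range_sub' (fun i => m (z i)), hz0, hzn]
  have hlim : Tendsto (fun n : ℕ => (b - a) / n * (m a - m b)) atTop (𝓝 0) := by
    simpa using (tendsto_const_div_atTop_nhds_zero_nat (b - a)).mul_const (m a - m b)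
  have := ge_of_tendsto hlim ((eventually_ge_atTop 1).mono hpartition)
  linarith

theorem integral_le_sub_of_mul_le_sub {m g : ℝ → ℝ} {a b : ℝ} (hab : a ≤ b)
    (hm : AntitoneOn m (Icc a b))
    (hg : ∀ x ∈ Icc a b, ∀ y ∈ Icc a b, x ≤ y → (y - x) * m y ≤ g x - g y) :
    ∫ z in a..b, m z ≤ g a - g b := by
  have hint : ∀ x ∈ Icc a b, ∀ y ∈ Icc a b, IntervalIntegrable m volume x y := fun x hx y hy =>
    (hm.mono (uIcc_subset_Icc hx hy)).intervalIntegrable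
  have ha : a ∈ Icc a b := left_mem_Icc.2 hab
  suffices (∫ z in a..b, m z) + g b ≤ (∫ z in a..a, m z) + g a by
    rw [intervalIntegral.integral_same] at this; linarith
  refine le_of_forall_sub_le_mul_sub (F := fun t => (∫ z in a..t, m z) + g t) (m := m) hab
    fun x hx y hy hxy => ?_
  have hmx : ∫ z in x..y, m z ≤ (y - x) * m x := by
    simpa using intervalIntegral.integral_mono_on hxy (hint x hx y hy) intervalIntegrable_const
      fun z hz => hm hx ⟨hx.1.trans hz.1, hz.2.trans hy.2⟩ hz.1
  rw [← intervalIntegral.integral_add_adjacent_intervals (hint a ha x hx) (hint x hx y hy)]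
  linarith [hg x hx y hy hxy]

section Demand

variable {P : ℝ → ℝ} {qbar : ℝ}

theorem V_sub_V (hP : AntitoneOn P (Icc 0 qbar)) {x y : ℝ} (hx : x ∈ Icc 0 qbar)
    (hy : y ∈ Icc 0 qbar) : V P y - V P x = ∫ z in x..y, P z := by
  have h0 : (0 : ℝ) ∈ Icc 0 qbar := left_mem_Icc.2 (hx.1.trans hx.2)
  exact intervalIntegral.integral_interval_sub_left (μ := volume)
    (hP.mono (uIcc_subset_Icc h0 hy)).intervalIntegrable
    (hP.mono (uIcc_subset_Icc h0 hx)).intervalIntegrable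

theorem mul_le_V_sub_V (hP : AntitoneOn P (Icc 0 qbar)) {x y : ℝ} (hx : x ∈ Icc 0 qbar)
    (hy : y ∈ Icc 0 qbar) (hxy : x ≤ y) : (y - x) * P y ≤ V P y - V P x := by
  rw [V_sub_V hP hx hy]
  simpa using intervalIntegral.integral_mono_on (μ := volume) hxy intervalIntegrable_const
    (hP.mono (uIcc_subset_Icc hx hy)).intervalIntegrable
    fun z hz => hP ⟨hx.1.trans hz.1, hz.2.trans hy.2⟩ hy hz.2

theorem V_sub_mul_le_V_sub_mul (hP : AntitoneOn P (Icc 0 qbar)) {θ x y : ℝ}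
    (hx : x ∈ Icc 0 qbar) (hy : y ∈ Icc 0 qbar) (hxy : x ≤ y) (hθ : θ ≤ P y) :
    V P x - θ * x ≤ V P y - θ * y := by
  nlinarith [mul_le_V_sub_V hP hx hy hxy, mul_le_mul_of_nonneg_left hθ (sub_nonneg.2 hxy)]

theorem lt_P_floor (hP : StrictAntiOn P (Icc 0 qbar)) {θ qe qhat c : ℝ}
    (hqe : qe ∈ Icc 0 qbar) (hθ : P qe = θ) (hpos : V P qe - c - θ * qe > 0)
    (hqhat : qhat ∈ Icc 0 qbar) (hfloor : V P qhat - qhat * P qhat = c) : θ < P qhat := by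
  by_contra! hle
  have hqe_le : qe ≤ qhat := (hP.le_iff_ge hqhat hqe).1 (hθ ▸ hle)
  nlinarith [mul_le_V_sub_V hP.antitoneOn hqe hqhat hqe_le, mul_le_mul_of_nonneg_left hle hqe.1]

end Demand

/-- The regulator's surplus, gross of rent, when type `θ` is given the allocation of type `θ'`. -/
noncomputable def allocSurplus (P : ℝ → ℝ) (c : ℝ) (r q : ℝ → ℝ) (θ θ' : ℝ) : ℝ :=
  r θ' * (V P (q θ') - c - θ * q θ')

theorem RS_eq_allocSurplus (P : ℝ → ℝ) (c α : ℝ) (r q u : ℝ → ℝ) (θ : ℝ) :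
    RS P c α r q u θ = allocSurplus P c r q θ θ - (1 - α) * u θ := rfl

theorem allocSurplus_eq_add (P : ℝ → ℝ) (c : ℝ) (r q : ℝ → ℝ) (θ θ' : ℝ) :
    allocSurplus P c r q θ θ' = allocSurplus P c r q θ' θ' + (θ' - θ) * (q θ' * r θ') := by
  unfold allocSurplus; ring

theorem FloorRandomized.exists_floor_set {θl θh qhat : ℝ} {r q u : ℝ → ℝ}
    (h : FloorRandomized θl θh qhat r q u) :
    ∃ T : Set ℝ, (∀ θ ∈ T, qhat ≤ q θ ∧ r θ = 1) ∧
      (∀ θ ∈ Icc θl θh, θ ∉ T → q θ = qhat ∨ r θ = 0) ∧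
      (∀ x ∈ Icc θl θh, x ∉ T → ∀ y ∈ T, y < x) := by
  obtain ⟨-, -, -, T1, T01, T0, hunion, h01, -, h0, -, -, -, hT1, hT01, hT0⟩ := h
  refine ⟨T1, hT1, fun θ hθ hθT => ?_, fun x hx hxT => ?_⟩
  · rw [← hunion] at hθ
    rcases hθ with (hθ | hθ) | hθ
    exacts [absurd hθ hθT, Or.inl (hT01 θ hθ).1, Or.inr (hT0 θ hθ).2]
  · rw [← hunion] at hx
    rcases hx with (hx | hx) | hx
    exacts [absurd hx hxT, h01 x hx, h0 x hx]

section FloorRandomized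

variable {θl θh qbar qhat c : ℝ} {P r q : ℝ → ℝ} {T : Set ℝ}

theorem mul_eq_floor_mul_of_notMem (hT : ∀ θ ∈ Icc θl θh, θ ∉ T → q θ = qhat ∨ r θ = 0)
    {θ : ℝ} (hθ : θ ∈ Icc θl θh) (hθT : θ ∉ T) : q θ * r θ = qhat * r θ := by
  rcases hT θ hθ hθT with h | h <;> simp [h]

theorem allocSurplus_of_notMem (hT : ∀ θ ∈ Icc θl θh, θ ∉ T → q θ = qhat ∨ r θ = 0)
    (hfloor : V P qhat - qhat * P qhat = c) {θ θ' : ℝ} (hθ' : θ' ∈ Icc θl θh) (hθ'T : θ' ∉ T) :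
    allocSurplus P c r q θ θ' = r θ' * (qhat * (P qhat - θ)) := by
  unfold allocSurplus
  rcases hT θ' hθ' hθ'T with h | h
  · rw [h]; linear_combination r θ' * hfloor
  · simp [h]

theorem floor_le_allocSurplus_self (hP : AntitoneOn P (Icc 0 qbar))
    (hq : ∀ θ ∈ Icc θl θh, q θ ∈ Icc 0 qbar) (hDD : ∀ θ ∈ Icc θl θh, θ ≤ P (q θ))
    (hqhat : qhat ∈ Icc 0 qbar) (hfloor : V P qhat - qhat * P qhat = c)
    (hT1 : ∀ θ ∈ T, qhat ≤ q θ ∧ r θ = 1) {θ : ℝ} (hθ : θ ∈ Icc θl θh) (hθT : θ ∈ T) :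
    qhat * (P qhat - θ) ≤ allocSurplus P c r q θ θ := by
  unfold allocSurplus
  rw [(hT1 θ hθT).2, one_mul]
  linarith [V_sub_mul_le_V_sub_mul hP hqhat (hq θ hθ) (hT1 θ hθT).1 (hDD θ hθ)]

theorem allocSurplus_self_nonneg (hP : AntitoneOn P (Icc 0 qbar))
    (hr : ∀ θ ∈ Icc θl θh, r θ ∈ Icc 0 1) (hq : ∀ θ ∈ Icc θl θh, q θ ∈ Icc 0 qbar)
    (hDD : ∀ θ ∈ Icc θl θh, θ ≤ P (q θ)) (hqhat : qhat ∈ Icc 0 qbar)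
    (hfloor : V P qhat - qhat * P qhat = c) (hT1 : ∀ θ ∈ T, qhat ≤ q θ ∧ r θ = 1)
    (hT : ∀ θ ∈ Icc θl θh, θ ∉ T → q θ = qhat ∨ r θ = 0) {θ : ℝ} (hθ : θ ∈ Icc θl θh)
    (hθP : θ ≤ P qhat) : 0 ≤ allocSurplus P c r q θ θ := by
  have hF : 0 ≤ qhat * (P qhat - θ) := mul_nonneg hqhat.1 (sub_nonneg.2 hθP)
  by_cases hθT : θ ∈ T
  · exact hF.trans (floor_le_allocSurplus_self hP hq hDD hqhat hfloor hT1 hθ hθT)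
  · rw [allocSurplus_of_notMem hT hfloor hθ hθT]
    exact mul_nonneg (hr θ hθ).1 hF

theorem allocSurplus_le_self (hP : AntitoneOn P (Icc 0 qbar))
    (hr : ∀ θ ∈ Icc θl θh, r θ ∈ Icc 0 1) (hq : ∀ θ ∈ Icc θl θh, q θ ∈ Icc 0 qbar)
    (hm : AntitoneOn (fun θ => q θ * r θ) (Icc θl θh)) (hDD : ∀ θ ∈ Icc θl θh, θ ≤ P (q θ))
    (hqhat : qhat ∈ Ioo 0 qbar) (hfloor : V P qhat - qhat * P qhat = c)
    (hT1 : ∀ θ ∈ T, qhat ≤ q θ ∧ r θ = 1) (hT : ∀ θ ∈ Icc θl θh, θ ∉ T → q θ = qhat ∨ r θ = 0)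
    (hTlt : ∀ x ∈ Icc θl θh, x ∉ T → ∀ y ∈ T, y < x) {x y : ℝ} (hx : x ∈ Icc θl θh)
    (hy : y ∈ Icc θl θh) (hxy : x ≤ y) (hxP : x ≤ P qhat) :
    allocSurplus P c r q x y ≤ allocSurplus P c r q x x := by
  have hqhat' : qhat ∈ Icc 0 qbar := Ioo_subset_Icc_self hqhat
  have hF : 0 ≤ qhat * (P qhat - x) := mul_nonneg hqhat'.1 (sub_nonneg.2 hxP)
  by_cases hyT : y ∈ T
  · have hxT : x ∈ T := by_contra fun hxT => (hTlt x hx hxT y hyT).not_ge hxy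
    have hqyx : q y ≤ q x := by
      simpa [(hT1 x hxT).2, (hT1 y hyT).2] using hm hx hy hxy
    unfold allocSurplus
    rw [(hT1 x hxT).2, (hT1 y hyT).2, one_mul, one_mul]
    linarith [V_sub_mul_le_V_sub_mul hP (hq y hy) (hq x hx) hqyx (hDD x hx)]
  rw [allocSurplus_of_notMem hT hfloor hy hyT]
  by_cases hxT : x ∈ T
  · calc r y * (qhat * (P qhat - x)) ≤ qhat * (P qhat - x) :=
          mul_le_of_le_one_left hF (hr y hy).2
      _ ≤ allocSurplus P c r q x x := floor_le_allocSurplus_self hP hq hDD hqhat' hfloor hT1 hx hxT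
  · rw [allocSurplus_of_notMem hT hfloor hx hxT]
    have hryx : r y ≤ r x := by
      have := hm hx hy hxy
      simp only [mul_eq_floor_mul_of_notMem hT hx hxT, mul_eq_floor_mul_of_notMem hT hy hyT] at this
      exact le_of_mul_le_mul_left this hqhat.1
    exact mul_le_mul_of_nonneg_right hryx hF

end FloorRandomized

theorem RS_antitoneOn {θl θh c α : ℝ} {P r q u : ℝ → ℝ} (hα : 0 ≤ α)
    (hm : AntitoneOn (fun θ => q θ * r θ) (Icc θl θh))
    (hm0 : ∀ θ ∈ Icc θl θh, 0 ≤ q θ * r θ)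
    (hu : ∀ θ ∈ Icc θl θh, u θ = ∫ z in θ..θh, q z * r z)
    (hle_self : ∀ x ∈ Icc θl θh, ∀ y ∈ Icc θl θh, x ≤ y →
      allocSurplus P c r q x y ≤ allocSurplus P c r q x x) :
    AntitoneOn (RS P c α r q u) (Icc θl θh) := by
  intro x hx y hy hxy
  have hθh : θh ∈ Icc θl θh := right_mem_Icc.2 (hx.1.trans hx.2)
  have hsub : Icc x y ⊆ Icc θl θh := Icc_subset_Icc hx.1 hy.2
  have hint : ∀ a ∈ Icc θl θh, ∀ b ∈ Icc θl θh,
      IntervalIntegrable (fun θ => q θ * r θ) volume a b := fun a ha b hb =>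
    (hm.mono (uIcc_subset_Icc ha hb)).intervalIntegrable
  have hrent : u x - u y = ∫ z in x..y, q z * r z := by
    rw [hu x hx, hu y hy, ← intervalIntegral.integral_add_adjacent_intervals (hint x hx y hy)
      (hint y hy θh hθh)]
    ring
  have hrent_nonneg : 0 ≤ ∫ z in x..y, q z * r z :=
    intervalIntegral.integral_nonneg hxy fun z hz => hm0 z (hsub hz)
  have hrent_le : ∫ z in x..y, q z * r z ≤
      allocSurplus P c r q x x - allocSurplus P c r q y y :=
    integral_le_sub_of_mul_le_sub hxy (hm.mono hsub) fun a ha b hb hab => by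
      have := hle_self a (hsub ha) b (hsub hb) hab
      rw [allocSurplus_eq_add] at this
      linarith
  rw [RS_eq_allocSurplus, RS_eq_allocSurplus]
  nlinarith [mul_nonneg hα hrent_nonneg]

section StochasticDominance

variable {G G' : Measure ℝ} [IsProbabilityMeasure G] [IsProbabilityMeasure G']

theorem measure_Iic_le_of_cdf_le (hFOSD : ∀ θ, cdf G' θ ≤ cdf G θ) (s : ℝ) :
    G' (Iic s) ≤ G (Iic s) := by
  have := hFOSD s
  rwa [cdf_eq_real, cdf_eq_real, measureReal_def, measureReal_def,
    ENNReal.toReal_le_toReal (measure_ne_top _ _) (measure_ne_top _ _)] at this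

theorem measure_Iio_le_of_cdf_le (hFOSD : ∀ θ, cdf G' θ ≤ cdf G θ) (s : ℝ) :
    G' (Iio s) ≤ G (Iio s) := by
  have hlim : Tendsto (fun n : ℕ => s - 1 / ((n : ℝ) + 1)) atTop (𝓝 s) := by
    simpa using (tendsto_const_nhds (x := s)).sub tendsto_one_div_add_atTop_nhds_zero_nat
  have hunion : ⋃ n : ℕ, Iic (s - 1 / ((n : ℝ) + 1)) = Iio s :=
    iUnion_Iic_eq_Iio_of_lt_of_tendsto (fun n => sub_lt_self s (by positivity)) hlim
  have hmono : Monotone fun n : ℕ => Iic (s - 1 / ((n : ℝ) + 1)) := fun i j hij =>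
    Iic_subset_Iic.2 (by gcongr)
  rw [← hunion, hmono.measure_iUnion, hmono.measure_iUnion]
  exact iSup_mono fun n => measure_Iic_le_of_cdf_le hFOSD _

theorem IsLowerSet.measure_le_of_cdf_le (hFOSD : ∀ θ, cdf G' θ ≤ cdf G θ) {S : Set ℝ}
    (hS : IsLowerSet S) : G' S ≤ G S := by
  rcases S.eq_empty_or_nonempty with rfl | hne
  · simp
  by_cases hbdd : BddAbove S
  · by_cases hmem : sSup S ∈ S
    · have hS_eq : S = Iic (sSup S) :=
        subset_antisymm (fun x hx => le_csSup hbdd hx) fun x hx => hS hx hmem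
      rw [hS_eq]
      exact measure_Iic_le_of_cdf_le hFOSD _
    · have hS_eq : S = Iio (sSup S) := by
        refine subset_antisymm (fun x hx => (le_csSup hbdd hx).lt_of_ne ?_) fun x hx => ?_
        · rintro rfl; exact hmem hx
        · obtain ⟨y, hy, hxy⟩ := exists_lt_of_lt_csSup hne hx
          exact hS hxy.le hy
      rw [hS_eq]
      exact measure_Iio_le_of_cdf_le hFOSD _
  · have hS_eq : S = univ := eq_univ_of_forall fun x => by
      obtain ⟨y, hy, hxy⟩ := not_bddAbove_iff.1 hbdd x
      exact hS hxy.le hy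
    simp [hS_eq]

theorem lintegral_le_of_antitone_of_cdf_le (hFOSD : ∀ θ, cdf G' θ ≤ cdf G θ) {g : ℝ → ℝ}
    (hg : Antitone g) (hg0 : 0 ≤ g) :
    ∫⁻ x, ENNReal.ofReal (g x) ∂G' ≤ ∫⁻ x, ENNReal.ofReal (g x) ∂G := by
  rw [lintegral_eq_lintegral_meas_lt G' (ae_of_all _ hg0) hg.measurable.aemeasurable,
    lintegral_eq_lintegral_meas_lt G (ae_of_all _ hg0) hg.measurable.aemeasurable]
  exact lintegral_mono fun t =>
    IsLowerSet.measure_le_of_cdf_le hFOSD fun _ _ hyx hx => hx.trans_le (hg hyx)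

theorem integral_le_of_antitone_of_cdf_le (hFOSD : ∀ θ, cdf G' θ ≤ cdf G θ) {g : ℝ → ℝ}
    (hg : Antitone g) (hg0 : 0 ≤ g) {C : ℝ} (hC : ∀ x, g x ≤ C) :
    ∫ x, g x ∂G' ≤ ∫ x, g x ∂G := by
  have hfin : ∫⁻ x, ENNReal.ofReal (g x) ∂G ≠ ⊤ := by
    refine ne_top_of_le_ne_top ENNReal.ofReal_ne_top (?_ : _ ≤ ENNReal.ofReal C)
    calc ∫⁻ x, ENNReal.ofReal (g x) ∂G ≤ ∫⁻ _, ENNReal.ofReal C ∂G :=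
          lintegral_mono fun x => ENNReal.ofReal_le_ofReal (hC x)
      _ = ENNReal.ofReal C := by simp
  rw [integral_eq_lintegral_of_nonneg_ae (ae_of_all _ hg0) hg.measurable.aestronglyMeasurable,
    integral_eq_lintegral_of_nonneg_ae (ae_of_all _ hg0) hg.measurable.aestronglyMeasurable]
  exact ENNReal.toReal_mono hfin (lintegral_le_of_antitone_of_cdf_le hFOSD hg hg0)

theorem integral_le_of_antitoneOn_of_cdf_le (hFOSD : ∀ θ, cdf G' θ ≤ cdf G θ) {a b : ℝ}
    (hab : a ≤ b) {f : ℝ → ℝ} (hf : AntitoneOn f (Icc a b)) (hf0 : ∀ x ∈ Icc a b, 0 ≤ f x)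
    (hG : G (Icc a b)ᶜ = 0) (hG' : G' (Icc a b)ᶜ = 0) :
    ∫ x, f x ∂G' ≤ ∫ x, f x ∂G := by
  set g : ℝ → ℝ := fun x => f (projIcc a b hab x)
  have hg : Antitone g := fun x y hxy =>
    hf (projIcc a b hab x).2 (projIcc a b hab y).2 (monotone_projIcc hab hxy)
  have hfg : ∀ μ : Measure ℝ, μ (Icc a b)ᶜ = 0 → ∫ x, f x ∂μ = ∫ x, g x ∂μ := fun μ hμ =>
    integral_congr_ae <| by
      filter_upwards [mem_ae_iff.2 hμ] with x hx
      simp [g, projIcc_of_mem hab hx]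
  rw [hfg G hG, hfg G' hG']
  exact integral_le_of_antitone_of_cdf_le hFOSD hg (fun x => hf0 _ (projIcc a b hab x).2)
    fun x => hf (left_mem_Icc.2 hab) (projIcc a b hab x).2 (projIcc a b hab x).2.1

end StochasticDominance

theorem stmt13_general (θl θh qbar c α qhat : ℝ) (P qe r q u : ℝ → ℝ)
    (hlt : θl < θh)
    (hα0 : 0 ≤ α)
    (hPanti : StrictAntiOn P (Icc 0 qbar))
    (hqe : ∀ θ ∈ Icc θl θh, qe θ ∈ Icc 0 qbar ∧ P (qe θ) = θ)
    (hA2 : V P (qe θh) - c - θh * qe θh > 0)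
    (hqhat_mem : qhat ∈ Ioo 0 qbar)
    (hqhat_eq : V P qhat - qhat * P qhat = c)
    (hvalid : Valid θl θh qbar r q)
    (hFR : FloorRandomized θl θh qhat r q u)
    (hDD : DD θl θh qe q)
    (G G' : MeasureTheory.Measure ℝ)
    [IsProbabilityMeasure G] [IsProbabilityMeasure G']
    (hGsupp : G (Set.Icc θl θh)ᶜ = 0) (hG'supp : G' (Set.Icc θl θh)ᶜ = 0)
    (hFOSD : ∀ θ : ℝ, ProbabilityTheory.cdf G' θ ≤ ProbabilityTheory.cdf G θ) :
    AntitoneOn (RS P c α r q u) (Icc θl θh) ∧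
    (∀ θ ∈ Icc θl θh, 0 ≤ RS P c α r q u θ) ∧
    ∫ θ, RS P c α r q u θ ∂G' ≤ ∫ θ, RS P c α r q u θ ∂G := by
  obtain ⟨T, hT1, hT, hTlt⟩ := hFR.exists_floor_set
  obtain ⟨⟨hm, henv⟩, -, hu_top, -⟩ := hFR
  obtain ⟨hr, hq⟩ := hvalid
  have hθh : θh ∈ Icc θl θh := right_mem_Icc.2 hlt.le
  have hqhat : qhat ∈ Icc 0 qbar := Ioo_subset_Icc_self hqhat_mem
  have hle_floor : ∀ θ ∈ Icc θl θh, θ ≤ P qhat := fun θ hθ =>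
    hθ.2.trans (lt_P_floor hPanti (hqe θh hθh).1 (hqe θh hθh).2 hA2 hqhat hqhat_eq).le
  have hle_price : ∀ θ ∈ Icc θl θh, θ ≤ P (q θ) := fun θ hθ =>
    (hqe θ hθ).2.symm.le.trans (hPanti.antitoneOn (hq θ hθ) (hqe θ hθ).1 (hDD.1 θ hθ))
  have hanti : AntitoneOn (RS P c α r q u) (Icc θl θh) :=
    RS_antitoneOn hα0 hm (fun θ hθ => mul_nonneg (hq θ hθ).1 (hr θ hθ).1)
      (fun θ hθ => by rw [henv θ hθ, hu_top, zero_add])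
      fun x hx y hy hxy => allocSurplus_le_self hPanti.antitoneOn hr hq hm hle_price hqhat_mem
        hqhat_eq hT1 hT hTlt hx hy hxy (hle_floor x hx)
  have hnonneg : ∀ θ ∈ Icc θl θh, 0 ≤ RS P c α r q u θ := fun θ hθ =>
    calc 0 ≤ allocSurplus P c r q θh θh :=
          allocSurplus_self_nonneg hPanti.antitoneOn hr hq hle_price hqhat hqhat_eq hT1 hT hθh
            (hle_floor θh hθh)
      _ = RS P c α r q u θh := by rw [RS_eq_allocSurplus, hu_top, mul_zero, sub_zero]
      _ ≤ RS P c α r q u θ := hanti hθ hθh hθ.2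
  exact ⟨hanti, hnonneg,
    integral_le_of_antitoneOn_of_cdf_le hFOSD hlt.le hanti hnonneg hGsupp hG'supp⟩

theorem stmt13 (θl θh qbar c α qhat : ℝ) (P qe r q u : ℝ → ℝ)
    (h0 : 0 < θl) (hlt : θl < θh) (hqbar : 0 < qbar) (hc : 0 < c)
    (hα0 : 0 ≤ α) (hα1 : α < 1)
    (hPcont : ContinuousOn P (Icc 0 qbar))
    (hPanti : StrictAntiOn P (Icc 0 qbar))
    (hPqbar : P qbar = 0)
    (hqe : ∀ θ ∈ Icc θl θh, qe θ ∈ Icc 0 qbar ∧ P (qe θ) = θ)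
    (hA2 : V P (qe θh) - c - θh * qe θh > 0)
    (hqhat_mem : qhat ∈ Ioo 0 qbar)
    (hqhat_eq : V P qhat - qhat * P qhat = c)
    (hvalid : Valid θl θh qbar r q)
    (hFR : FloorRandomized θl θh qhat r q u)
    (hDD : DD θl θh qe q)
    (G G' : MeasureTheory.Measure ℝ)
    [IsProbabilityMeasure G] [IsProbabilityMeasure G']
    (hGsupp : G (Set.Icc θl θh)ᶜ = 0) (hG'supp : G' (Set.Icc θl θh)ᶜ = 0)
    (hFOSD : ∀ θ : ℝ, ProbabilityTheory.cdf G' θ ≤ ProbabilityTheory.cdf G θ) :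
    AntitoneOn (RS P c α r q u) (Icc θl θh) ∧
    (∀ θ ∈ Icc θl θh, 0 ≤ RS P c α r q u θ) ∧
    ∫ θ, RS P c α r q u θ ∂G' ≤ ∫ θ, RS P c α r q u θ ∂G :=
  stmt13_general θl θh qbar c α qhat P qe r q u hlt hα0 hPanti hqe hA2 hqhat_mem hqhat_eq hvalid hFR
    hDD G G' hGsupp hG'supp hFOSD
end

section
/- Key surplus inequality for monotonicity: let P be strictly decreasing, q decreasing with q(θ) ≤ P⁻¹(θ) for all θ (downward distortion), and θ < θ'. Then ∫_{q(θ')}^{q(θ)} (P(z) - θ) dz ≥ ∫_θ^{θ'} (q(y) - q(θ')) dy. -/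
open Set MeasureTheory

/-! The information rent `∫_θ^θ' (q y - q θ') dy` is the area of the region between the level
`q θ'` and the graph of `q` over `(θ, θ']`. Downward distortion `y ≤ P (q y)` together with the
monotonicity of `P` shows that, with the axes swapped, this region lies in the region between the
level `θ` and the graph of `P` over `(q θ', q θ]`, whose area is the surplus gain. -/

theorem setIntegral_sub_le_of_swap_image_regionBetween_subset {f₁ g₁ f₂ g₂ : ℝ → ℝ}
    {s t : Set ℝ} (hs : MeasurableSet s) (ht : MeasurableSet t)
    (hf₁ : IntegrableOn f₁ s) (hg₁ : IntegrableOn g₁ s)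
    (hf₂ : IntegrableOn f₂ t) (hg₂ : IntegrableOn g₂ t)
    (hfg₁ : ∀ x ∈ s, f₁ x ≤ g₁ x) (hfg₂ : ∀ x ∈ t, f₂ x ≤ g₂ x)
    (hsub : Prod.swap '' regionBetween f₁ g₁ s ⊆ regionBetween f₂ g₂ t) :
    ∫ x in s, (g₁ - f₁) x ≤ ∫ x in t, (g₂ - f₂) x := by
  have harea : (volume.prod volume) (regionBetween f₁ g₁ s) ≤
      (volume.prod volume) (regionBetween f₂ g₂ t) := by
    rw [← (Measure.measurePreserving_swap (μ := volume) (ν := volume)).measure_preimage_equiv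
      (f := MeasurableEquiv.prodComm) (regionBetween f₂ g₂ t)]
    exact measure_mono fun p hp => hsub ⟨p, hp, rfl⟩
  rw [volume_regionBetween_eq_integral hf₁ hg₁ hs hfg₁,
    volume_regionBetween_eq_integral hf₂ hg₂ ht hfg₂] at harea
  exact (ENNReal.ofReal_le_ofReal_iff
    (setIntegral_nonneg ht fun x hx => sub_nonneg.mpr (hfg₂ x hx))).mp harea

section DownwardDistortion

variable {P q : ℝ → ℝ} {D : Set ℝ} {θ θ' : ℝ}

theorem swap_image_regionBetween_subset_of_le_comp [D.OrdConnected] (hP : StrictAntiOn P D)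
    (hq : AntitoneOn q (Icc θ θ')) (hqD : MapsTo q (Icc θ θ') D)
    (hDD : ∀ y ∈ Icc θ θ', y ≤ P (q y)) :
    Prod.swap '' regionBetween (fun _ => q θ') q (Ioc θ θ') ⊆
      regionBetween (fun _ => θ) P (Ioc (q θ') (q θ)) := by
  rintro _ ⟨⟨y, z⟩, ⟨hy, hz_gt, hz_lt⟩, rfl⟩
  have hy' : y ∈ Icc θ θ' := Ioc_subset_Icc_self hy
  have hθ'_mem : θ' ∈ Icc θ θ' := right_mem_Icc.mpr (hy.1.le.trans hy.2)
  have hzD : z ∈ D :=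
    OrdConnected.out inferInstance (hqD hθ'_mem) (hqD hy') ⟨hz_gt.le, hz_lt.le⟩
  refine ⟨⟨hz_gt, hz_lt.le.trans (hq (left_mem_Icc.mpr hθ'_mem.1) hy' hy.1.le)⟩, hy.1, ?_⟩
  exact (hDD y hy').trans_lt (hP hzD (hqD hy') hz_lt)

theorem integral_sub_le_integral_sub_of_le_comp [D.OrdConnected] (hPc : ContinuousOn P D)
    (hP : StrictAntiOn P D) (hq : AntitoneOn q (Icc θ θ')) (hqD : MapsTo q (Icc θ θ') D)
    (hDD : ∀ y ∈ Icc θ θ', y ≤ P (q y)) (hθθ' : θ ≤ θ') :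
    ∫ y in θ..θ', (q y - q θ') ≤ ∫ z in (q θ')..(q θ), (P z - θ) := by
  have hθ_mem : θ ∈ Icc θ θ' := left_mem_Icc.mpr hθθ'
  have hθ'_mem : θ' ∈ Icc θ θ' := right_mem_Icc.mpr hθθ'
  have hqq : q θ' ≤ q θ := hq hθ_mem hθ'_mem hθθ'
  have hPD : Icc (q θ') (q θ) ⊆ D := OrdConnected.out inferInstance (hqD hθ'_mem) (hqD hθ_mem)
  rw [intervalIntegral.integral_of_le hθθ', intervalIntegral.integral_of_le hqq]
  refine setIntegral_sub_le_of_swap_image_regionBetween_subset (f₁ := fun _ => q θ')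
    (f₂ := fun _ => θ) measurableSet_Ioc measurableSet_Ioc
    (integrableOn_const measure_Ioc_lt_top.ne)
    ((hq.integrableOn_isCompact isCompact_Icc).mono_set Ioc_subset_Icc_self)
    (integrableOn_const measure_Ioc_lt_top.ne)
    ((hPc.mono hPD).integrableOn_Icc.mono_set Ioc_subset_Icc_self)
    (fun y hy => hq (Ioc_subset_Icc_self hy) hθ'_mem hy.2) (fun z hz => ?_)
    (swap_image_regionBetween_subset_of_le_comp hP hq hqD hDD)
  exact (hDD θ hθ_mem).trans (hP.antitoneOn (hPD (Ioc_subset_Icc_self hz)) (hqD hθ_mem) hz.2)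

end DownwardDistortion

theorem stmt14_general (θl θh qbar : ℝ) (P q : ℝ → ℝ)
    (hPcont : ContinuousOn P (Icc 0 qbar))
    (hPanti : StrictAntiOn P (Icc 0 qbar))
    (hq_range : ∀ θ ∈ Icc θl θh, q θ ∈ Icc (0:ℝ) qbar)
    (hq_anti : AntitoneOn q (Icc θl θh))
    (hDD : ∀ θ ∈ Icc θl θh, θ ≤ P (q θ))
    (θ θ' : ℝ) (hθ : θ ∈ Icc θl θh) (hθ' : θ' ∈ Icc θl θh) (hθθ' : θ < θ') :
    (∫ z in (q θ')..(q θ), (P z - θ)) ≥ ∫ y in θ..θ', (q y - q θ') := by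
  have hsub : Icc θ θ' ⊆ Icc θl θh := Icc_subset_Icc hθ.1 hθ'.2
  exact integral_sub_le_integral_sub_of_le_comp hPcont hPanti (hq_anti.mono hsub)
    (fun y hy => hq_range y (hsub hy)) (fun y hy => hDD y (hsub hy)) hθθ'.le

theorem stmt14 (θl θh qbar : ℝ) (P q : ℝ → ℝ)
    (h0 : 0 < θl) (hlt : θl < θh) (hqbar : 0 < qbar)
    (hPcont : ContinuousOn P (Icc 0 qbar))
    (hPanti : StrictAntiOn P (Icc 0 qbar))
    (hq_range : ∀ θ ∈ Icc θl θh, q θ ∈ Icc (0:ℝ) qbar)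
    (hq_anti : AntitoneOn q (Icc θl θh))
    (hDD : ∀ θ ∈ Icc θl θh, θ ≤ P (q θ))
    (θ θ' : ℝ) (hθ : θ ∈ Icc θl θh) (hθ' : θ' ∈ Icc θl θh) (hθθ' : θ < θ') :
    (∫ z in (q θ')..(q θ), (P z - θ)) ≥ ∫ y in θ..θ', (q y - q θ') :=
  stmt14_general θl θh qbar P q hPcont hPanti hq_range hq_anti hDD θ θ' hθ hθ' hθθ'
end

section
/- Let M = (r, q, u) be a floor-randomized mechanism satisfying downward distortion and left-continuity, and suppose M is dominated by a floor-randomized, left-continuous, DD mechanism M̃ = (r̃, q̃, ũ). If the set D = {θ : q̃(θ)r̃(θ) > q(θ)r(θ)} is nonempty, then ũ(θ) < u(θ) for every θ ∈ D. -/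
open Set Filter MeasureTheory

/-! Suppose `u θ ≤ ũ θ` at a type with `q r < q̃ r̃`. Since `ũ - u = ∫ (q̃ r̃ - q r)` over
`[·, θh]`, the rent difference grows strictly as the type decreases through a region where
`q r < q̃ r̃`; conversely, dominance gives `q r < q̃ r̃` wherever `u < ũ`, because the surplus
of a floor-randomized mechanism is monotone in the effective quantity below the efficient one.
Left-continuity of `q r` lets this propagate all the way down to `θl`, where downward distortion
forces `P qhat = θl`. Then both mechanisms shut down every type above `θl`, so both have zero
surplus at every type, contradicting strict dominance. -/

open Topology

theorem Icc_subset_of_downward_induction {α : Type*} [ConditionallyCompleteLinearOrder α]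
    {a b : α} {S : Set α}
    (hlim : ∀ m ∈ Icc a b, Ioc m b ⊆ S → m ∈ S)
    (hstep : ∀ m ∈ Ioc a b, m ∈ S → ∃ l < m, Ioo l m ⊆ S) :
    Icc a b ⊆ S := by
  intro x hx
  by_contra hxS
  have hB : (Icc a b \ S).Nonempty := ⟨x, hx, hxS⟩
  have hBbdd : BddAbove (Icc a b \ S) := ⟨b, fun z hz => hz.1.2⟩
  set m := sSup (Icc a b \ S)
  have hxm : x ≤ m := le_csSup hBbdd ⟨hx, hxS⟩
  have hmS : m ∈ S := by
    refine hlim m ⟨hx.1.trans hxm, csSup_le hB fun z hz => hz.1.2⟩ fun w hw => ?_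
    by_contra hwS
    exact hw.1.not_ge (le_csSup hBbdd ⟨⟨(hx.1.trans hxm).trans hw.1.le, hw.2⟩, hwS⟩)
  rcases (hx.1.trans hxm).eq_or_lt with ham | ham
  · exact hxS (le_antisymm hxm (ham ▸ hx.1) ▸ hmS)
  obtain ⟨l, hlm, hlS⟩ := hstep m ⟨ham, csSup_le hB fun z hz => hz.1.2⟩ hmS
  obtain ⟨z, hzB, hlz⟩ := exists_lt_of_lt_csSup hB hlm
  rcases (le_csSup hBbdd hzB).eq_or_lt with rfl | hzm
  · exact hzB.2 hmS
  · exact hzB.2 (hlS ⟨hlz, hzm⟩)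

lemma V_add_mul_le {P : ℝ → ℝ} {a b z : ℝ} (hP : ContinuousOn P (Icc 0 b))
    (ha : 0 ≤ a) (hab : a ≤ b) (hz : ∀ s ∈ Icc a b, z ≤ P s) :
    V P a + z * (b - a) ≤ V P b := by
  have hb : b ∈ Icc 0 b := ⟨ha.trans hab, le_rfl⟩
  have hadd : V P a + ∫ s in a..b, P s = V P b :=
    intervalIntegral.integral_add_adjacent_intervals
      (hP.mono (uIcc_subset_Icc ⟨le_rfl, hb.1⟩ ⟨ha, hab⟩)).intervalIntegrable
      (hP.mono (uIcc_subset_Icc ⟨ha, hab⟩ hb)).intervalIntegrable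
  have hmono : ∫ _ in a..b, z ≤ ∫ s in a..b, P s :=
    intervalIntegral.integral_mono_on hab intervalIntegrable_const
      (hP.mono (uIcc_subset_Icc ⟨ha, hab⟩ hb)).intervalIntegrable hz
  rw [intervalIntegral.integral_const, smul_eq_mul] at hmono
  linarith

/-- Surplus of type `z` at effective quantity `t = q * r` under a floor-randomized mechanism:
below the floor `t = r * qhat`, and `r * (V qhat - c - z * qhat) = t * (P qhat - z)` by the
choice of `qhat`. -/
noncomputable def floorSurplus (P : ℝ → ℝ) (c qhat z t : ℝ) : ℝ :=
  if qhat ≤ t then V P t - c - z * t else t * (P qhat - z)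

lemma floorSurplus_monotoneOn {P : ℝ → ℝ} {c qhat z x : ℝ}
    (hP : ContinuousOn P (Icc 0 x)) (hqhat : 0 ≤ qhat)
    (hc : V P qhat - qhat * P qhat = c)
    (hzP : ∀ s ∈ Icc 0 x, z ≤ P s) (hzq : z ≤ P qhat) :
    MonotoneOn (floorSurplus P c qhat z) (Icc 0 x) := by
  intro a ha b hb hab
  have hPb : ContinuousOn P (Icc 0 b) := hP.mono (Icc_subset_Icc le_rfl hb.2)
  have hzb : ∀ s ∈ Icc 0 b, z ≤ P s := fun s hs => hzP s ⟨hs.1, hs.2.trans hb.2⟩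
  unfold floorSurplus
  split_ifs with hqa hqb hqb
  · linarith [V_add_mul_le hPb ha.1 hab fun s hs => hzb s ⟨ha.1.trans hs.1, hs.2⟩]
  · exact absurd (hqa.trans hab) hqb
  · have hV := V_add_mul_le hPb hqhat hqb fun s hs => hzb s ⟨hqhat.trans hs.1, hs.2⟩
    nlinarith
  · exact mul_le_mul_of_nonneg_right hab (by linarith)

namespace FloorRandomized

variable {θl θh qhat c z : ℝ} {P r q u : ℝ → ℝ}

lemma trichotomy (hFR : FloorRandomized θl θh qhat r q u) (hz : z ∈ Icc θl θh) :
    (qhat ≤ q z ∧ r z = 1) ∨ (q z = qhat ∧ r z ∈ Ioo 0 1) ∨ (q z = 0 ∧ r z = 0) := by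
  obtain ⟨-, -, -, T1, T01, T0, hunion, -, -, -, -, -, -, h1, h01, h0⟩ := hFR
  rcases (hunion ▸ hz : z ∈ T1 ∪ T01 ∪ T0) with (h | h) | h
  · exact Or.inl (h1 z h)
  · exact Or.inr (Or.inl (h01 z h))
  · exact Or.inr (Or.inr (h0 z h))

lemma surplus_eq_floorSurplus (hFR : FloorRandomized θl θh qhat r q u) (hz : z ∈ Icc θl θh)
    (hqhat : 0 < qhat) (hc : V P qhat - qhat * P qhat = c) :
    r z * (V P (q z) - c - z * q z) = floorSurplus P c qhat z (q z * r z) := by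
  rcases hFR.trichotomy hz with ⟨hq, hr⟩ | ⟨hq, hr⟩ | ⟨hq, hr⟩
  · rw [hr, mul_one, one_mul, floorSurplus, if_pos hq]
  · have hlt : q z * r z < qhat := by rw [hq]; exact mul_lt_of_lt_one_right hqhat hr.2
    rw [floorSurplus, if_neg hlt.not_ge, hq]
    linear_combination r z * hc
  · simp [hq, hr, floorSurplus, hqhat.not_ge]

lemma eq_zero_of_lt (hFR : FloorRandomized θl θh qhat r q u) (hz : z ∈ Icc θl θh)
    (hq : q z < qhat) : q z = 0 ∧ r z = 0 := by
  rcases hFR.trichotomy hz with h | h | h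
  · exact absurd h.1 hq.not_ge
  · exact absurd h.1 hq.ne
  · exact h

end FloorRandomized

namespace IC

variable {θl θh a b : ℝ} {r q u : ℝ → ℝ}

lemma intervalIntegrable (hIC : IC θl θh r q u) (ha : a ∈ Icc θl θh) (hb : b ∈ Icc θl θh) :
    IntervalIntegrable (fun w => q w * r w) volume a b :=
  (hIC.1.mono (uIcc_subset_Icc ha hb)).intervalIntegrable

lemma sub_eq_integral (hIC : IC θl θh r q u) (ha : a ∈ Icc θl θh) (hb : b ∈ Icc θl θh) :
    u a - u b = ∫ w in a..b, q w * r w := by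
  have hθh : θh ∈ Icc θl θh := ⟨ha.1.trans ha.2, le_rfl⟩
  rw [hIC.2 a ha, hIC.2 b hb, ← intervalIntegral.integral_add_adjacent_intervals
    (hIC.intervalIntegrable ha hb) (hIC.intervalIntegrable hb hθh)]
  ring

lemma mul_lt_mul_at_left_of_rent_le {θ : ℝ} {rt qt ut : ℝ → ℝ}
    (hIC : IC θl θh r q u) (hIC' : IC θl θh rt qt ut) (hLC : LeftCont θl θh r q)
    (hrent : ∀ z ∈ Icc θl θh, u z < ut z → q z * r z < qt z * rt z)
    (hθ : θ ∈ Icc θl θh) (hD : q θ * r θ < qt θ * rt θ) (hu : u θ ≤ ut θ) :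
    q θl * r θl < qt θl * rt θl := by
  suffices Icc θl θ ⊆ {z | q z * r z < qt z * rt z} from this ⟨le_rfl, hθ.1⟩
  apply Icc_subset_of_downward_induction
  · intro m hm hmD
    rcases hm.2.eq_or_lt with rfl | hmθ
    · exact hD
    -- `ut - u` grows strictly from `θ` down to `m`, so `u m < ut m`.
    have hmem : m ∈ Icc θl θh := ⟨hm.1, hm.2.trans hθ.2⟩
    have hpos : 0 < ∫ w in m..θ, (qt w * rt w - q w * r w) :=
      intervalIntegral.intervalIntegral_pos_of_pos_on
        ((hIC'.intervalIntegrable hmem hθ).sub (hIC.intervalIntegrable hmem hθ))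
        (fun w hw => sub_pos.2 (hmD ⟨hw.1, hw.2.le⟩)) hmθ
    rw [intervalIntegral.integral_sub (hIC'.intervalIntegrable hmem hθ)
      (hIC.intervalIntegrable hmem hθ), ← hIC.sub_eq_integral hmem hθ,
      ← hIC'.sub_eq_integral hmem hθ] at hpos
    exact hrent m hmem (by linarith)
  · intro m hm hmD
    -- `q r` is left-continuous and `qt rt` is antitone.
    have hmem : m ∈ Icc θl θh := ⟨hm.1.le, hm.2.trans hθ.2⟩
    have hev : ∀ᶠ s in 𝓝[<] m, q s * r s < qt m * rt m :=
      (hLC m ⟨hm.1, hmem.2⟩).eventually_lt_const hmD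
    obtain ⟨l, hlm, hl⟩ := mem_nhdsLT_iff_exists_Ioo_subset.1 hev
    refine ⟨max l θl, max_lt hlm hm.1, fun s hs => ?_⟩
    have hsmem : s ∈ Icc θl θh := ⟨(le_max_right _ _).trans hs.1.le, hs.2.le.trans hmem.2⟩
    exact (hl ⟨(le_max_left _ _).trans_lt hs.1, hs.2⟩).trans_le (hIC'.1 hsmem hmem hs.2.le)

end IC

lemma Valid.mul_mem_Icc {θl θh qbar z : ℝ} {qe r q : ℝ → ℝ} (hvalid : Valid θl θh qbar r q)
    (hDD : DD θl θh qe q) (hz : z ∈ Icc θl θh) : q z * r z ∈ Icc 0 (qe z) :=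
  ⟨mul_nonneg (hvalid.2 z hz).1 (hvalid.1 z hz).1,
    (mul_le_of_le_one_right (hvalid.2 z hz).1 (hvalid.1 z hz).2).trans (hDD.1 z hz)⟩

section Regulation

variable {θl θh qbar c α qhat z : ℝ} {P qe r q u rt qt ut : ℝ → ℝ}

lemma FloorRandomized.eq_zero_of_P_lt (hFR : FloorRandomized θl θh qhat r q u)
    (hDD : DD θl θh qe q) (hPanti : StrictAntiOn P (Icc 0 qbar))
    (hqe : ∀ θ ∈ Icc θl θh, qe θ ∈ Icc 0 qbar ∧ P (qe θ) = θ) (hqhat : qhat ∈ Icc 0 qbar)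
    (hz : z ∈ Icc θl θh) (hPz : P qhat < z) : q z = 0 ∧ r z = 0 := by
  have hqe_lt : qe z < qhat := by
    rw [← hPanti.lt_iff_gt hqhat (hqe z hz).1, (hqe z hz).2]
    exact hPz
  exact hFR.eq_zero_of_lt hz ((hDD.1 z hz).trans_lt hqe_lt)

lemma surplus_le_surplus_of_mul_le (hPcont : ContinuousOn P (Icc 0 qbar))
    (hPanti : StrictAntiOn P (Icc 0 qbar))
    (hqe : ∀ θ ∈ Icc θl θh, qe θ ∈ Icc 0 qbar ∧ P (qe θ) = θ)
    (hqhat : qhat ∈ Ioo 0 qbar) (hc : V P qhat - qhat * P qhat = c)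
    (hvalid : Valid θl θh qbar r q) (hvalid' : Valid θl θh qbar rt qt)
    (hFR : FloorRandomized θl θh qhat r q u) (hFR' : FloorRandomized θl θh qhat rt qt ut)
    (hDD : DD θl θh qe q) (hDD' : DD θl θh qe qt) (hz : z ∈ Icc θl θh)
    (hle : qt z * rt z ≤ q z * r z) :
    rt z * (V P (qt z) - c - z * qt z) ≤ r z * (V P (q z) - c - z * q z) := by
  obtain ⟨hqe_mem, hPqe⟩ := hqe z hz
  by_cases hzP : z ≤ P qhat
  · have hPge : ∀ s ∈ Icc 0 (qe z), z ≤ P s := fun s hs => by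
      rw [← hPqe]
      exact hPanti.antitoneOn ⟨hs.1, hs.2.trans hqe_mem.2⟩ hqe_mem hs.2
    rw [hFR.surplus_eq_floorSurplus hz hqhat.1 hc, hFR'.surplus_eq_floorSurplus hz hqhat.1 hc]
    exact floorSurplus_monotoneOn (hPcont.mono (Icc_subset_Icc le_rfl hqe_mem.2)) hqhat.1.le hc
      hPge hzP (hvalid'.mul_mem_Icc hDD' hz) (hvalid.mul_mem_Icc hDD hz) hle
  · have hqhat' := Ioo_subset_Icc_self hqhat
    rw [(hFR.eq_zero_of_P_lt hDD hPanti hqe hqhat' hz (not_le.1 hzP)).2,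
      (hFR'.eq_zero_of_P_lt hDD' hPanti hqe hqhat' hz (not_le.1 hzP)).2, zero_mul, zero_mul]

lemma FloorRandomized.P_eq_of_mul_lt_mul_at_left (hFR : FloorRandomized θl θh qhat r q u)
    (hDD : DD θl θh qe q) (hvalid' : Valid θl θh qbar rt qt) (hDD' : DD θl θh qe qt)
    (hPqe : P (qe θl) = θl) (hθ : θl ≤ θh) (hlt : q θl * r θl < qt θl * rt θl) :
    P qhat = θl := by
  have hθl : θl ∈ Icc θl θh := ⟨le_rfl, hθ⟩
  have hXt := (hvalid'.mul_mem_Icc hDD' hθl).2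
  rw [← hDD.2] at hXt
  rcases hFR.trichotomy hθl with ⟨-, hr⟩ | ⟨hq, -⟩ | ⟨hq, hr⟩
  · rw [hr, mul_one] at hlt
    linarith
  · rwa [← hq, hDD.2]
  · rw [hq, zero_mul] at hlt
    linarith

lemma FloorRandomized.RS_eq_zero_of_P_eq (hFR : FloorRandomized θl θh qhat r q u)
    (hDD : DD θl θh qe q) (hPanti : StrictAntiOn P (Icc 0 qbar))
    (hqe : ∀ θ ∈ Icc θl θh, qe θ ∈ Icc 0 qbar ∧ P (qe θ) = θ) (hqhat : qhat ∈ Icc 0 qbar)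
    (hc : V P qhat - qhat * P qhat = c) (hP : P qhat = θl) (hz : z ∈ Icc θl θh) :
    RS P c α r q u z = 0 := by
  have hu : u z = 0 := by
    have hu := hFR.1.sub_eq_integral hz ⟨hz.1.trans hz.2, le_rfl⟩
    rw [hFR.2.2.1, sub_zero] at hu
    rw [hu, intervalIntegral.integral_of_le hz.2]
    refine setIntegral_eq_zero_of_forall_eq_zero fun w hw => ?_
    rw [(hFR.eq_zero_of_P_lt hDD hPanti hqe hqhat ⟨hz.1.trans hw.1.le, hw.2⟩
      (hP ▸ hz.1.trans_lt hw.1)).2, mul_zero]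
  have hsurplus : r z * (V P (q z) - c - z * q z) = 0 := by
    rcases hz.1.eq_or_lt with rfl | hzl
    · have hqe_eq : qe θl = qhat :=
        hPanti.injOn (hqe θl hz).1 hqhat (by rw [(hqe θl hz).2, hP])
      have hq : q θl = qhat ∨ r θl = 0 := by
        rcases hFR.trichotomy hz with - | ⟨hq, -⟩ | ⟨-, hr⟩
        · exact Or.inl (hDD.2.trans hqe_eq)
        · exact Or.inl hq
        · exact Or.inr hr
      rcases hq with hq | hr
      · rw [hq]
        linear_combination r θl * hc + r θl * qhat * hP
      · rw [hr, zero_mul]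
    · rw [(hFR.eq_zero_of_P_lt hDD hPanti hqe hqhat hz (hP ▸ hzl)).2, zero_mul]
  rw [RS, hsurplus, hu, mul_zero, sub_zero]

end Regulation

theorem stmt16_general (θl θh qbar c α qhat : ℝ) (P qe r q u rt qt ut : ℝ → ℝ)
    (hα1 : α < 1)
    (hPcont : ContinuousOn P (Icc 0 qbar))
    (hPanti : StrictAntiOn P (Icc 0 qbar))
    (hqe : ∀ θ ∈ Icc θl θh, qe θ ∈ Icc 0 qbar ∧ P (qe θ) = θ)
    (hqhat_mem : qhat ∈ Ioo 0 qbar)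
    (hqhat_eq : V P qhat - qhat * P qhat = c)
    (hvalid : Valid θl θh qbar r q) (hvalid' : Valid θl θh qbar rt qt)
    (hFR : FloorRandomized θl θh qhat r q u)
    (hFR' : FloorRandomized θl θh qhat rt qt ut)
    (hLC : LeftCont θl θh r q)
    (hDD : DD θl θh qe q) (hDD' : DD θl θh qe qt)
    (hdom : Dominates θl θh P c α rt qt ut r q u) :
    ∀ θ ∈ Icc θl θh, q θ * r θ < qt θ * rt θ → ut θ < u θ := by
  intro θ hθ hD
  by_contra! hu
  have hrent : ∀ z ∈ Icc θl θh, u z < ut z → q z * r z < qt z * rt z := by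
    intro z hz hlt
    by_contra! hle
    have hS := surplus_le_surplus_of_mul_le hPcont hPanti hqe hqhat_mem hqhat_eq hvalid hvalid'
      hFR hFR' hDD hDD' hz hle
    have hRS := hdom.1 z hz
    rw [RS, RS] at hRS
    linarith [mul_pos (sub_pos.2 hα1) (sub_pos.2 hlt)]
  have hθl : θl ≤ θh := hθ.1.trans hθ.2
  have hP : P qhat = θl := hFR.P_eq_of_mul_lt_mul_at_left hDD hvalid' hDD'
    (hqe θl ⟨le_rfl, hθl⟩).2 hθl (hFR.1.mul_lt_mul_at_left_of_rent_le hFR'.1 hLC hrent hθ hD hu)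
  have hqhat := Ioo_subset_Icc_self hqhat_mem
  obtain ⟨z, hz, hlt⟩ := hdom.2
  rw [hFR.RS_eq_zero_of_P_eq hDD hPanti hqe hqhat hqhat_eq hP hz,
    hFR'.RS_eq_zero_of_P_eq hDD' hPanti hqe hqhat hqhat_eq hP hz] at hlt
  exact hlt.false

theorem stmt16 (θl θh qbar c α qhat : ℝ) (P qe r q u rt qt ut : ℝ → ℝ)
    (h0 : 0 < θl) (hlt : θl < θh) (hqbar : 0 < qbar) (hc : 0 < c)
    (hα0 : 0 ≤ α) (hα1 : α < 1)
    (hPcont : ContinuousOn P (Icc 0 qbar))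
    (hPanti : StrictAntiOn P (Icc 0 qbar))
    (hPqbar : P qbar = 0)
    (hqe : ∀ θ ∈ Icc θl θh, qe θ ∈ Icc 0 qbar ∧ P (qe θ) = θ)
    (hqhat_mem : qhat ∈ Ioo 0 qbar)
    (hqhat_eq : V P qhat - qhat * P qhat = c)
    (hvalid : Valid θl θh qbar r q) (hvalid' : Valid θl θh qbar rt qt)
    (hFR : FloorRandomized θl θh qhat r q u)
    (hFR' : FloorRandomized θl θh qhat rt qt ut)
    (hLC : LeftCont θl θh r q) (hLC' : LeftCont θl θh rt qt)
    (hDD : DD θl θh qe q) (hDD' : DD θl θh qe qt)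
    (hdom : Dominates θl θh P c α rt qt ut r q u) :
    ∀ θ ∈ Icc θl θh, q θ * r θ < qt θ * rt θ → ut θ < u θ :=
  stmt16_general θl θh qbar c α qhat P qe r q u rt qt ut hα1 hPcont hPanti hqe hqhat_mem hqhat_eq
    hvalid hvalid' hFR hFR' hLC hDD hDD' hdom
end

section
/- Comparative statics of rotations: let P and P_n be strictly decreasing continuous inverse demand functions on [0, q̄] such that q ↦ P(q) - P_n(q) is strictly decreasing and P_n(P⁻¹(θ̲)) = θ̲. Then (i) V_n(q) - q·P_n(q) < V(q) - q·P(q) for all q > 0, where V_n(q) = ∫₀^q P_n; (ii) the quantity floor q̂_n under P_n (solving V_n(q) - qP_n(q) = c) is strictly larger than the quantity floor q̂ under P; and (iii) P_n⁻¹(θ) ≤ P⁻¹(θ) for all θ ∈ [θ̲, θ̄], with strict inequality for θ > θ̲. -/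
/-! The rent `V f q - q * f q = ∫₀^q (f z - f q) dz` is additive in `f`, positive when `f` is
strictly decreasing, and increasing in `q` when `f` is decreasing. Applied to `D = P - Pn` this
gives (i), and (i) at `q̂` together with the monotonicity of the rent under `Pn` gives (ii).
For (iii), `D` vanishes at `P⁻¹(θ̲)`; a type `θ > θ̲` has `P⁻¹(θ) < P⁻¹(θ̲)`, so `D (P⁻¹ θ) > 0`,
i.e. `Pn (P⁻¹ θ) < θ = Pn (Pn⁻¹ θ)`. -/

open Set Filter MeasureTheory

lemma V_sub {f g : ℝ → ℝ} {q : ℝ} (hf : IntervalIntegrable f volume 0 q)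
    (hg : IntervalIntegrable g volume 0 q) :
    V (fun z => f z - g z) q = V f q - V g q :=
  intervalIntegral.integral_sub hf hg

lemma mul_lt_V_of_strictAntiOn {f : ℝ → ℝ} {q : ℝ} (hq : 0 < q)
    (hf : IntervalIntegrable f volume 0 q) (hanti : StrictAntiOn f (Icc 0 q)) :
    q * f q < V f q := by
  have hpos : 0 < ∫ z in (0:ℝ)..q, (f z - f q) :=
    intervalIntegral.intervalIntegral_pos_of_pos_on (hf.sub intervalIntegrable_const)
      (fun z hz => sub_pos.2 (hanti (Ioo_subset_Icc_self hz) (right_mem_Icc.2 hq.le) hz.2)) hq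
  rw [intervalIntegral.integral_sub hf intervalIntegrable_const,
    intervalIntegral.integral_const, smul_eq_mul, sub_zero] at hpos
  exact sub_pos.1 hpos

lemma V_sub_mul_lt_of_strictAntiOn_sub {P Pn : ℝ → ℝ} {b q : ℝ} (hP : ContinuousOn P (Icc 0 b))
    (hPn : ContinuousOn Pn (Icc 0 b)) (hD : StrictAntiOn (fun z => P z - Pn z) (Icc 0 b))
    (hq : q ∈ Ioc 0 b) :
    V Pn q - q * Pn q < V P q - q * P q := by
  have hsub : Icc 0 q ⊆ Icc 0 b := Icc_subset_Icc_right hq.2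
  have hPi := (hP.mono hsub).intervalIntegrable_of_Icc (μ := volume) hq.1.le
  have hPni := (hPn.mono hsub).intervalIntegrable_of_Icc (μ := volume) hq.1.le
  have := mul_lt_V_of_strictAntiOn hq.1 (hPi.sub hPni) (hD.mono hsub)
  rw [V_sub hPi hPni] at this
  linarith

lemma monotoneOn_V_sub_mul {f : ℝ → ℝ} {b : ℝ} (hf : ContinuousOn f (Icc 0 b))
    (hanti : AntitoneOn f (Icc 0 b)) :
    MonotoneOn (fun q => V f q - q * f q) (Icc 0 b) := by
  intro x hx y hy hxy
  have hint : ∀ {u v}, u ∈ Icc 0 b → v ∈ Icc 0 b → IntervalIntegrable f volume u v :=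
    fun hu hv => (hf.mono (uIcc_subset_Icc hu hv)).intervalIntegrable
  have hsplit : V f x + ∫ z in x..y, f z = V f y :=
    intervalIntegral.integral_add_adjacent_intervals (hint (left_mem_Icc.2 (hx.1.trans hx.2)) hx)
      (hint hx hy)
  have hlower : (y - x) * f y ≤ ∫ z in x..y, f z := by
    simpa only [intervalIntegral.integral_const, smul_eq_mul] using
      intervalIntegral.integral_mono_on hxy intervalIntegrable_const (hint hx hy)
        fun z hz => hanti ⟨hx.1.trans hz.1, hz.2.trans hy.2⟩ hy hz.2
  have hgap : 0 ≤ x * (f x - f y) := mul_nonneg hx.1 (sub_nonneg.2 (hanti hx hy hxy))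
  show V f x - x * f x ≤ V f y - y * f y
  linarith

lemma lt_of_strictAntiOn_sub {P Pn : ℝ → ℝ} {s : Set ℝ} (hP : StrictAntiOn P s)
    (hD : StrictAntiOn (fun q => P q - Pn q) s) {x₀ x : ℝ} (hx₀ : x₀ ∈ s) (hx : x ∈ s)
    (hcross : Pn x₀ = P x₀) (hlt : P x₀ < P x) : Pn x < P x := by
  have : P x₀ - Pn x₀ < P x - Pn x := hD hx hx₀ ((hP.lt_iff_gt hx₀ hx).1 hlt)
  linarith

theorem stmt18_general (θl θh qbar c : ℝ) (P Pn pinv pninv : ℝ → ℝ) (qhat qhatn : ℝ)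
    (hPcont : ContinuousOn P (Icc 0 qbar))
    (hPanti : StrictAntiOn P (Icc 0 qbar))
    (hPncont : ContinuousOn Pn (Icc 0 qbar))
    (hPnanti : StrictAntiOn Pn (Icc 0 qbar))
    -- strictly decreasing difference
    (hdiff : ∀ q' q : ℝ, q' ∈ Icc 0 qbar → q ∈ Icc 0 qbar → q' < q →
        P q - Pn q < P q' - Pn q')
    -- generalized inverses of P and Pn on the type space
    (hpinv : ∀ θ ∈ Icc θl θh, pinv θ ∈ Icc 0 qbar ∧ P (pinv θ) = θ)
    (hpninv : ∀ θ ∈ Icc θl θh, pninv θ ∈ Icc 0 qbar ∧ Pn (pninv θ) = θ)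
    -- P and Pn cross at the efficient quantity of the lowest type
    (hcross : Pn (pinv θl) = θl)
    -- quantity floors under P and Pn
    (hqhat : qhat ∈ Ioo 0 qbar ∧ V P qhat - qhat * P qhat = c)
    (hqhatn : qhatn ∈ Ioo 0 qbar ∧ V Pn qhatn - qhatn * Pn qhatn = c) :
    (∀ q ∈ Ioc (0:ℝ) qbar, V Pn q - q * Pn q < V P q - q * P q) ∧
    qhat < qhatn ∧
    (∀ θ ∈ Icc θl θh, pninv θ ≤ pinv θ ∧ (θl < θ → pninv θ < pinv θ)) := by
  have hD : StrictAntiOn (fun q => P q - Pn q) (Icc 0 qbar) :=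
    fun x hx y hy hxy => hdiff x y hx hy hxy
  have hrent : ∀ q ∈ Ioc (0:ℝ) qbar, V Pn q - q * Pn q < V P q - q * P q :=
    fun q hq => V_sub_mul_lt_of_strictAntiOn_sub hPcont hPncont hD hq
  refine ⟨hrent, ?_, fun θ hθ => ?_⟩
  · by_contra! hle
    have hmono : V Pn qhatn - qhatn * Pn qhatn ≤ V Pn qhat - qhat * Pn qhat :=
      monotoneOn_V_sub_mul hPncont hPnanti.antitoneOn
        (Ioo_subset_Icc_self hqhatn.1) (Ioo_subset_Icc_self hqhat.1) hle
    have := hrent qhat (Ioo_subset_Ioc_self hqhat.1)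
    linarith [hqhat.2, hqhatn.2]
  · obtain ⟨hpm, hpe⟩ := hpinv θ hθ
    obtain ⟨hpnm, hpne⟩ := hpninv θ hθ
    obtain ⟨hplm, hple⟩ := hpinv θl (left_mem_Icc.2 (hθ.1.trans hθ.2))
    have hstrict : θl < θ → pninv θ < pinv θ := fun hθl => by
      rw [← hPnanti.lt_iff_gt hpm hpnm, hpne]
      refine (lt_of_strictAntiOn_sub hPanti hD hplm hpm (hcross.trans hple.symm) ?_).trans_eq hpe
      rwa [hple, hpe]
    refine ⟨?_, hstrict⟩
    obtain rfl | hθl := hθ.1.eq_or_lt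
    · exact (hPnanti.injOn hpnm hpm (hpne.trans hcross.symm)).le
    · exact (hstrict hθl).le

theorem stmt18 (θl θh qbar c : ℝ) (P Pn pinv pninv : ℝ → ℝ) (qhat qhatn : ℝ)
    (h0 : 0 < θl) (hlt : θl < θh) (hqbar : 0 < qbar) (hc : 0 < c)
    (hPcont : ContinuousOn P (Icc 0 qbar))
    (hPanti : StrictAntiOn P (Icc 0 qbar))
    (hPncont : ContinuousOn Pn (Icc 0 qbar))
    (hPnanti : StrictAntiOn Pn (Icc 0 qbar))
    -- strictly decreasing difference
    (hdiff : ∀ q' q : ℝ, q' ∈ Icc 0 qbar → q ∈ Icc 0 qbar → q' < q →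
        P q - Pn q < P q' - Pn q')
    -- generalized inverses of P and Pn on the type space
    (hpinv : ∀ θ ∈ Icc θl θh, pinv θ ∈ Icc 0 qbar ∧ P (pinv θ) = θ)
    (hpninv : ∀ θ ∈ Icc θl θh, pninv θ ∈ Icc 0 qbar ∧ Pn (pninv θ) = θ)
    -- P and Pn cross at the efficient quantity of the lowest type
    (hcross : Pn (pinv θl) = θl)
    -- quantity floors under P and Pn
    (hqhat : qhat ∈ Ioo 0 qbar ∧ V P qhat - qhat * P qhat = c)
    (hqhatn : qhatn ∈ Ioo 0 qbar ∧ V Pn qhatn - qhatn * Pn qhatn = c) :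
    (∀ q ∈ Ioc (0:ℝ) qbar, V Pn q - q * Pn q < V P q - q * P q) ∧
    qhat < qhatn ∧
    (∀ θ ∈ Icc θl θh, pninv θ ≤ pinv θ ∧ (θl < θ → pninv θ < pinv θ)) :=
  stmt18_general θl θh qbar c P Pn pinv pninv qhat qhatn hPcont hPanti hPncont hPnanti hdiff hpinv
    hpninv hcross hqhat hqhatn
end
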